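/- arXiv:1910.01393 — 10 statements merged into one kernel-verified Lean document; each statement's English description precedes it below -/
import Mathlib

section
/- In an odd FL_e-chain (a linearly ordered involutive FL_e-algebra with t = f), for all x and y, τ(x * y) = max(τ(x), τ(y)), where τ(z) = z → z. -/
/-- In an odd FL_e-chain, τ(x * y) = max (τ x) (τ y). -/
theorem stmt3 {X : Type*} [LinearOrder X] (mul imp : X → X → X) (t f : X)
    (hcomm : ∀ a b, mul a b = mul b a)
    (hassoc : ∀ a b c, mul (mul a b) c = mul a (mul b c))
    (hone : ∀ a, mul a t = a)
    (hres : ∀ a b c, mul a b ≤ c ↔ b ≤ imp a c)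
    (hodd : t = f)
    (hinv : ∀ x, imp (imp x f) f = x)
    (x y : X) :
    imp (mul x y) (mul x y) = max (imp x x) (imp y y) := by
  have lcomm : ∀ a b c, mul a (mul b c) = mul b (mul a c) := by
    intro a b c
    rw [← hassoc, hcomm a b, hassoc]
  -- monotonicity of mul in the right argument
  have mono : ∀ {a b : X} (c : X), a ≤ b → mul c a ≤ mul c b := by
    intro a b c h
    exact (hres c a (mul c b)).mpr (le_trans h ((hres c b (mul c b)).mp le_rfl))
  have monoL : ∀ {a b : X} (c : X), a ≤ b → mul a c ≤ mul b c := by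
    intro a b c h
    rw [hcomm a c, hcomm b c]
    exact mono c h
  -- z ⊙ z' ≤ f
  have zz' : ∀ z : X, mul z (imp z f) ≤ f := fun z => (hres z (imp z f) f).mpr le_rfl
  -- easy direction : τ a ≤ τ (a⊙b)
  have easy : ∀ a b : X, imp a a ≤ imp (mul a b) (mul a b) := by
    intro a b
    apply (hres (mul a b) (imp a a) (mul a b)).mp
    have e : mul (mul a b) (imp a a) = mul (mul a (imp a a)) b := by
      rw [hassoc, hcomm b, ← hassoc]
    rw [e]
    exact monoL b ((hres a (imp a a) a).mpr le_rfl)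
  set u := imp (mul x y) (mul x y) with hu
  have hxyu : mul (mul x y) u ≤ mul x y := (hres _ u _).mpr le_rfl
  refine le_antisymm ?_ (max_le (easy x y) (by rw [hu, hcomm x y]; exact easy y x))
  by_contra hc
  have hmax : max (imp x x) (imp y y) < u := not_le.mp hc
  have hx : imp x x < u := lt_of_le_of_lt (le_max_left _ _) hmax
  have hy : imp y y < u := lt_of_le_of_lt (le_max_right _ _) hmax
  -- key positivity: z⊙u⊙z' > f when τ z < u
  have key : ∀ z : X, imp z z < u → f < mul (imp z f) (mul z u) := by
    intro z hz
    rcases lt_or_ge f (mul (imp z f) (mul z u)) with h | h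
    · exact h
    · exfalso
      have h2 : mul z u ≤ imp (imp z f) f := (hres _ _ _).mp h
      rw [hinv z] at h2
      exact absurd ((hres z u z).mp h2) (not_le.mpr hz)
  have hA := key x hx
  have hB := key y hy
  set P := mul (imp x f) (mul x u) with hP
  set Q := mul (imp y f) (mul y u) with hQ
  -- positives are closed under multiplication (uses oddness)
  have pos : f < mul P Q := by
    rcases lt_or_ge f (mul P Q) with h | h
    · exact h
    · exfalso
      have hq : Q ≤ imp P f := (hres P Q f).mp h
      have hPf : imp P f < t := by
        rcases lt_or_ge (imp P f) t with h' | h'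
        · exact h'
        · exfalso
          have : P ≤ f := by
            calc P = mul P t := (hone P).symm
              _ ≤ mul P (imp P f) := mono _ h'
              _ ≤ f := zz' P
          exact absurd this (not_le.mpr hA)
      rw [hodd] at hPf
      exact absurd (lt_of_le_of_lt hq hPf) (not_lt.mpr (le_of_lt hB))
  -- but the product is ≤ f
  have upper : mul P Q ≤ f := by
    have eq1 : mul P Q
        = mul (mul (mul (mul x y) u) u) (mul (imp x f) (imp y f)) := by
      rw [hP, hQ]
      simp only [hassoc, lcomm, hcomm]
    have step1 : mul (mul (mul (mul x y) u) u) (mul (imp x f) (imp y f))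
        ≤ mul (mul x y) (mul (imp x f) (imp y f)) := by
      apply monoL
      calc mul (mul (mul x y) u) u ≤ mul (mul x y) u := monoL u hxyu
        _ ≤ mul x y := hxyu
    have eq2 : mul (mul x y) (mul (imp x f) (imp y f))
        = mul (mul x (imp x f)) (mul y (imp y f)) := by
      simp only [hassoc, lcomm, hcomm]
    have step2 : mul (mul x (imp x f)) (mul y (imp y f)) ≤ f := by
      calc mul (mul x (imp x f)) (mul y (imp y f))
          ≤ mul (mul x (imp x f)) t := mono _ (le_of_le_of_eq (zz' y) hodd.symm)
        _ = mul x (imp x f) := hone _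
        _ ≤ f := zz' x
    calc mul P Q = _ := eq1
      _ ≤ mul (mul x y) (mul (imp x f) (imp y f)) := step1
      _ = mul (mul x (imp x f)) (mul y (imp y f)) := eq2
      _ ≤ f := step2
  exact absurd upper (not_le.mpr pos)
end

section
/- In an odd FL_e-chain, for all x and y, τ(x → y) = max(τ(x), τ(y)), where τ(z) = z → z. -/
/-- In an odd FL_e-chain, τ(x → y) = max (τ x) (τ y). -/
theorem stmt4 {X : Type*} [LinearOrder X] (mul imp : X → X → X) (t f : X)
    (hcomm : ∀ a b, mul a b = mul b a)
    (hassoc : ∀ a b c, mul (mul a b) c = mul a (mul b c))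
    (hone : ∀ a, mul a t = a)
    (hres : ∀ a b c, mul a b ≤ c ↔ b ≤ imp a c)
    (hodd : t = f)
    (hinv : ∀ x, imp (imp x f) f = x)
    (x y : X) :
    imp (imp x y) (imp x y) = max (imp x x) (imp y y) := by
  have hlc : ∀ a b c, mul a (mul b c) = mul b (mul a c) := fun a b c => by
    rw [← hassoc, hcomm a b, hassoc]
  have mono : ∀ (c : X) {a b : X}, a ≤ b → mul c a ≤ mul c b := fun c a b h =>
    (hres c a (mul c b)).mpr (le_trans h ((hres c b (mul c b)).mp le_rfl))
  have L2 : ∀ a b, mul a (imp a b) ≤ b := fun a b => (hres a (imp a b) b).mpr le_rfl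
  have L3 : ∀ a, t ≤ imp a a := fun a => (hres a t a).mp (le_of_eq (hone a))
  set r := imp x y with hr
  set u := imp r r with hu
  -- easy direction
  have easy1 : imp x x ≤ u := by
    refine (hres r (imp x x) r).mp ?_
    refine (hres x (mul r (imp x x)) y).mp ?_
    rw [hlc x r]
    calc mul r (mul x (imp x x)) ≤ mul r x := mono r (L2 x x)
      _ = mul x r := hcomm r x
      _ ≤ y := L2 x y
  have easy2 : imp y y ≤ u := by
    refine (hres r (imp y y) r).mp ?_
    refine (hres x (mul r (imp y y)) y).mp ?_
    rw [← hassoc x r]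
    calc mul (mul x r) (imp y y) = mul (imp y y) (mul x r) := hcomm _ _
      _ ≤ mul (imp y y) y := mono _ (L2 x y)
      _ = mul y (imp y y) := hcomm _ _
      _ ≤ y := L2 y y
  have hmaxle : max (imp x x) (imp y y) ≤ u := max_le easy1 easy2
  have hard : u ≤ max (imp x x) (imp y y) := by
    rcases le_or_gt u (imp x x) with h | hx
    · exact le_trans h (le_max_left _ _)
    rcases le_or_gt u (imp y y) with h | hy
    · exact le_trans h (le_max_right _ _)
    exfalso
    have tu : t ≤ u := L3 r
    have ur : mul u r = r := by
      apply le_antisymm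
      · rw [hcomm]; exact L2 r r
      · calc r = mul r t := (hone r).symm
          _ ≤ mul r u := mono r tu
          _ = mul u r := hcomm r u
    have uu : mul u u = u := by
      apply le_antisymm
      · refine (hres r (mul u u) r).mp (le_of_eq ?_)
        calc mul r (mul u u) = mul u (mul u r) := by
              rw [hlc r u, hcomm r u]
          _ = r := by rw [ur, ur]
      · calc u = mul u t := (hone u).symm
          _ ≤ mul u u := mono u tu
    -- r = (x*y')'
    have rq : r = imp (mul x (imp y f)) f := by
      apply le_antisymm
      · refine (hres (mul x (imp y f)) r f).mp ?_
        calc mul (mul x (imp y f)) r = mul (imp y f) (mul x r) := by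
              rw [hassoc, hlc x (imp y f) r]
          _ ≤ mul (imp y f) y := mono _ (L2 x y)
          _ = mul y (imp y f) := hcomm _ _
          _ ≤ f := L2 y f
      · refine (hres x (imp (mul x (imp y f)) f) y).mp ?_
        have step : mul x (imp (mul x (imp y f)) f) ≤ imp (imp y f) f := by
          refine (hres (imp y f) _ f).mp ?_
          calc mul (imp y f) (mul x (imp (mul x (imp y f)) f))
              = mul (mul x (imp y f)) (imp (mul x (imp y f)) f) := by
                rw [hassoc, hlc (imp y f) x]
            _ ≤ f := L2 _ f
        exact le_of_le_of_eq step (hinv y)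
    have qr : imp r f = mul x (imp y f) := by rw [rq, hinv]
    have uq : mul u (mul x (imp y f)) = mul x (imp y f) := by
      rw [← qr]
      apply le_antisymm
      · refine (hres r (mul u (imp r f)) f).mp ?_
        calc mul r (mul u (imp r f)) = mul (mul u r) (imp r f) := by
              rw [hassoc, hlc r u]
          _ = mul r (imp r f) := by rw [ur]
          _ ≤ f := L2 r f
      · calc imp r f = mul (imp r f) t := (hone _).symm
          _ ≤ mul (imp r f) u := mono _ tu
          _ = mul u (imp r f) := hcomm _ _
    -- x*x' ≤ t and y'*y ≤ t
    have xxt : mul x (imp x f) ≤ t := by rw [hodd]; exact L2 x f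
    have yyt : mul (imp y f) y ≤ t := by
      rw [hodd, hcomm]; exact L2 y f
    -- e1 : u * (x * x') = u
    have e1 : mul u (mul x (imp x f)) = u := by
      have hnle : ¬ mul u (mul x (imp x f)) ≤ t := by
        intro hle
        rw [hodd] at hle
        have h1 : mul (imp x f) (mul x u) ≤ f := by
          calc mul (imp x f) (mul x u) = mul u (mul x (imp x f)) := by
                simp only [hcomm, hlc, hassoc]
          _ ≤ f := hle
        have h2 : mul x u ≤ imp (imp x f) f := (hres _ _ _).mp h1
        rw [hinv x] at h2
        exact hx.not_ge ((hres x u x).mp h2)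
      have htlt : t < mul u (mul x (imp x f)) := not_le.mp hnle
      apply le_antisymm
      · calc mul u (mul x (imp x f)) ≤ mul u t := mono u xxt
          _ = u := hone u
      · calc u = mul u t := (hone u).symm
          _ ≤ mul u (mul u (mul x (imp x f))) := mono u htlt.le
          _ = mul (mul u u) (mul x (imp x f)) := (hassoc u u _).symm
          _ = mul u (mul x (imp x f)) := by rw [uu]
    -- e2 : u * (y' * y) = u
    have e2 : mul u (mul (imp y f) y) = u := by
      have hnle : ¬ mul u (mul (imp y f) y) ≤ t := by
        intro hle
        rw [hodd] at hle
        have h1 : mul y (mul (imp y f) u) ≤ f := by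
          calc mul y (mul (imp y f) u) = mul u (mul (imp y f) y) := by
                simp only [hcomm, hlc, hassoc]
          _ ≤ f := hle
        have h2 : mul (imp y f) u ≤ imp y f := (hres _ _ _).mp h1
        have h3 : u ≤ imp (imp y f) (imp y f) := (hres _ _ _).mp h2
        have contr : imp (imp y f) (imp y f) ≤ imp y y := by
          refine (hres y _ y).mp ?_
          have s1 : mul (imp y f) (mul y (imp (imp y f) (imp y f))) ≤ f := by
            calc mul (imp y f) (mul y (imp (imp y f) (imp y f)))
                = mul y (mul (imp y f) (imp (imp y f) (imp y f))) := hlc _ _ _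
              _ ≤ mul y (imp y f) := mono y (L2 _ _)
              _ ≤ f := L2 y f
          have s2 : mul y (imp (imp y f) (imp y f)) ≤ imp (imp y f) f :=
            (hres _ _ _).mp s1
          exact le_of_le_of_eq s2 (hinv y)
        exact hy.not_ge (le_trans h3 contr)
      have htlt : t < mul u (mul (imp y f) y) := not_le.mp hnle
      apply le_antisymm
      · calc mul u (mul (imp y f) y) ≤ mul u t := mono u yyt
          _ = u := hone u
      · calc u = mul u t := (hone u).symm
          _ ≤ mul u (mul u (mul (imp y f) y)) := mono u htlt.le
          _ = mul (mul u u) (mul (imp y f) y) := (hassoc u u _).symm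
          _ = mul u (mul (imp y f) y) := by rw [uu]
    -- final computation
    have final : u ≤ t := by
      calc u = mul u u := uu.symm
        _ = mul (mul u (mul x (imp x f))) (mul u (mul (imp y f) y)) := by rw [e1, e2]
        _ = mul (mul u u) (mul (mul x (imp y f)) (mul (imp x f) y)) := by
            simp only [hcomm, hlc, hassoc]
        _ = mul u (mul (mul x (imp y f)) (mul (imp x f) y)) := by rw [uu]
        _ = mul (mul u (mul x (imp y f))) (mul (imp x f) y) := (hassoc _ _ _).symm
        _ = mul (mul x (imp y f)) (mul (imp x f) y) := by rw [uq]
        _ = mul (mul x (imp x f)) (mul (imp y f) y) := by simp only [hcomm, hlc, hassoc]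
        _ ≤ mul (mul x (imp x f)) t := mono _ yyt
        _ = mul t (mul x (imp x f)) := hcomm _ _
        _ ≤ mul t t := mono t xxt
        _ = t := hone t
    exact (lt_of_le_of_lt (L3 x) hx).not_ge final
  exact le_antisymm hard hmaxle
end

section
/- In an odd FL_e-chain, τ(x') = τ(x) for all x, where x' = x → f is the residual complement and τ(z) = z → z. -/
/-- In an odd FL_e-chain, τ(x') = τ(x) where x' = x → f. -/
theorem stmt5 {X : Type*} [LinearOrder X] (mul imp : X → X → X) (t f : X)
    (hcomm : ∀ a b, mul a b = mul b a)
    (hassoc : ∀ a b c, mul (mul a b) c = mul a (mul b c))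
    (hone : ∀ a, mul a t = a)
    (hres : ∀ a b c, mul a b ≤ c ↔ b ≤ imp a c)
    (hodd : t = f)
    (hinv : ∀ x, imp (imp x f) f = x)
    (x : X) :
    imp (imp x f) (imp x f) = imp x x := by
  -- key: mul p q ≤ imp r f ↔ mul p r ≤ imp q f
  have key : ∀ p q r : X, mul p q ≤ imp r f ↔ mul p r ≤ imp q f := by
    intro p q r
    rw [← hres, ← hres, hcomm r (mul p q), hcomm q (mul p r),
      hassoc p q r, hassoc p r q, hcomm q r]
  -- characterize membership in lower sets
  have h1 : ∀ b : X, b ≤ imp (imp x f) (imp x f) ↔ mul (imp x f) x ≤ imp b f := by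
    intro b
    rw [← hres, key]
  have h2 : ∀ b : X, b ≤ imp x x ↔ mul (imp x f) x ≤ imp b f := by
    intro b
    conv_lhs => rw [← hres, ← hinv x]
    rw [key, hcomm, hinv]
  apply le_antisymm
  · rw [h2, ← h1]
  · rw [h1, ← h2]
end

section
/- If an odd FL_e-chain X is generated (as an algebra, under ∧, ∨, *, →, and the constants) by a finite set, then X has only finitely many positive idempotent elements. -/
/-- A finitely generated odd FL_e-chain has only finitely many positive
idempotent elements. -/
theorem stmt6 {X : Type*} [LinearOrder X] (mul imp : X → X → X) (t f : X)
    (hcomm : ∀ a b, mul a b = mul b a)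
    (hassoc : ∀ a b c, mul (mul a b) c = mul a (mul b c))
    (hone : ∀ a, mul a t = a)
    (hres : ∀ a b c, mul a b ≤ c ↔ b ≤ imp a c)
    (hodd : t = f)
    (hinv : ∀ x, imp (imp x f) f = x)
    (S : Finset X)
    (hgen : ∀ P : Set X, (↑S : Set X) ⊆ P → t ∈ P → f ∈ P →
      (∀ a ∈ P, ∀ b ∈ P, mul a b ∈ P) →
      (∀ a ∈ P, ∀ b ∈ P, imp a b ∈ P) →
      (∀ a ∈ P, ∀ b ∈ P, a ⊓ b ∈ P) →
      (∀ a ∈ P, ∀ b ∈ P, a ⊔ b ∈ P) → P = Set.univ) :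
    {p : X | t ≤ p ∧ mul p p = p}.Finite := by
  letI M : CommMonoid X :=
    { mul := mul
      one := t
      mul_assoc := hassoc
      one_mul := fun a => (hcomm t a).trans (hone a)
      mul_one := hone
      mul_comm := hcomm }
  have h1 : (1 : X) = t := rfl
  have R : ∀ a b c : X, a * b ≤ c ↔ b ≤ imp a c := hres
  have mono : ∀ {a b : X} (c : X), a ≤ b → c * a ≤ c * b := by
    intro a b c h
    exact (R c a (c * b)).2 (h.trans ((R c b (c * b)).1 le_rfl))
  have monoL : ∀ {a b : X} (c : X), a ≤ b → a * c ≤ b * c := by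
    intro a b c h
    rw [mul_comm a c, mul_comm b c]
    exact mono c h
  have mono2 : ∀ {a b c d : X}, a ≤ b → c ≤ d → a * c ≤ b * d :=
    fun hab hcd => (monoL _ hab).trans (mono _ hcd)
  have NN : ∀ x : X, imp (imp x f) f = x := hinv
  have negf : ∀ a b : X, a * b ≤ f ↔ b ≤ imp a f := fun a b => R a b f
  have anti : ∀ {a b : X}, a ≤ b → imp b f ≤ imp a f := by
    intro a b h
    apply (negf a (imp b f)).1
    calc a * imp b f ≤ b * imp b f := monoL _ h
      _ ≤ f := (negf b (imp b f)).2 le_rfl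
  have anti' : ∀ {a b : X}, imp b f ≤ imp a f → a ≤ b := by
    intro a b h
    have h2 := anti h
    rwa [NN a, NN b] at h2
  have negt : imp t f = t := by
    have htt : imp t t = t := by
      apply le_antisymm
      · have h2 : t * imp t t ≤ t := (R t (imp t t) t).2 le_rfl
        rwa [← h1, one_mul] at h2
      · apply (R t t t).1
        rw [← h1, one_mul]
    rw [← hodd]
    exact htt
  have posneg : ∀ u : X, t ≤ u → imp u f ≤ t := by
    intro u hu
    have h2 := anti hu
    rwa [negt] at h2
  have taupos : ∀ x : X, t ≤ imp x x := by
    intro x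
    apply (R x t x).1
    rw [← h1, mul_one]
  have taumul : ∀ z : X, imp z z * z = z := by
    intro z
    apply le_antisymm
    · rw [mul_comm]
      exact (R z (imp z z) z).2 le_rfl
    · calc z = 1 * z := (one_mul z).symm
        _ ≤ imp z z * z := monoL z (h1.trans_le (taupos z))
  have tau_idem : ∀ z : X, imp z z * imp z z = imp z z := by
    intro z
    apply le_antisymm
    · apply (R z (imp z z * imp z z) z).1
      apply le_of_eq
      calc z * (imp z z * imp z z) = (imp z z * z) * imp z z := by
            simp only [mul_assoc, mul_left_comm, mul_comm]
        _ = z * imp z z := by rw [taumul z]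
        _ = imp z z * z := mul_comm _ _
        _ = z := taumul z
    · calc imp z z = 1 * imp z z := (one_mul _).symm
        _ ≤ imp z z * imp z z := monoL _ (h1.trans_le (taupos z))
  have impeq : ∀ a b : X, imp a b = imp (a * imp b f) f := by
    intro a b
    apply le_antisymm
    · apply (negf (a * imp b f) (imp a b)).1
      calc (a * imp b f) * imp a b = imp b f * (a * imp a b) := by
            rw [mul_comm a (imp b f), mul_assoc]
        _ ≤ imp b f * b := mono _ ((R a (imp a b) b).2 le_rfl)
        _ ≤ f := by rw [mul_comm]; exact (negf b (imp b f)).2 le_rfl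
    · apply (R a (imp (a * imp b f) f) b).1
      have h6 : imp b f * (a * imp (a * imp b f) f) ≤ f := by
        calc imp b f * (a * imp (a * imp b f) f)
            = (a * imp b f) * imp (a * imp b f) f := by
              rw [← mul_assoc, mul_comm (imp b f) a]
          _ ≤ f := (negf _ _).2 le_rfl
      have h7 := (negf (imp b f) (a * imp (a * imp b f) f)).1 h6
      rwa [NN] at h7
  have xxp : ∀ x : X, x * imp x f = imp (imp x x) f := by
    intro x
    rw [impeq x x, NN]
  have tauneg : ∀ b : X, imp (imp b f) (imp b f) = imp b b := by
    intro b
    rw [impeq (imp b f) (imp b f), NN b, impeq b b, mul_comm (imp b f) b]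
  have tau_prod_ge : ∀ x y : X, imp x x ≤ imp (x * y) (x * y) := by
    intro x y
    apply (R (x * y) (imp x x) (x * y)).1
    apply le_of_eq
    calc (x * y) * imp x x = (imp x x * x) * y := by
          simp only [mul_assoc, mul_left_comm, mul_comm]
      _ = x * y := by rw [taumul]
  have fixneg : ∀ p z : X, p * z ≤ z → p * imp z f ≤ imp z f := by
    intro p z hz
    have h5 : z * (p * imp z f) ≤ f := by
      calc z * (p * imp z f) = (p * z) * imp z f := by
            rw [← mul_assoc, mul_comm z p]
        _ ≤ z * imp z f := monoL _ hz
        _ ≤ f := (negf z (imp z f)).2 le_rfl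
    exact (negf z (p * imp z f)).1 h5
  have contra : ∀ s p : X, t ≤ p → p * p = p → s < p → p * imp s f ≤ s → False := by
    intro s p hpt hpp hsp hps
    have base : p * imp p s ≤ s := (R p (imp p s) s).2 le_rfl
    have hpe : p * imp p s ≤ imp p s := by
      apply (R p (p * imp p s) s).1
      calc p * (p * imp p s) = (p * p) * imp p s := (mul_assoc _ _ _).symm
        _ = p * imp p s := by rw [hpp]
        _ ≤ s := base
    have hd_le_s : imp (imp p s) f ≤ s := by
      have h2 : imp s f ≤ imp p s := (R p (imp s f) s).1 hps
      have h3 := anti h2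
      rwa [NN] at h3
    have het : ¬ t ≤ imp p s := by
      intro hte
      have hle : p ≤ s := by
        calc p = p * 1 := (mul_one p).symm
          _ = p * t := by rw [h1]
          _ ≤ p * imp p s := mono _ hte
          _ ≤ s := base
      exact absurd hle (not_le_of_gt hsp)
    have htd : t ≤ imp (imp p s) f := by
      rcases le_total t (imp (imp p s) f) with h | h
      · exact h
      · exfalso
        apply het
        have h4 := anti h
        rwa [NN, negt] at h4
    have hpd : p * imp (imp p s) f ≤ imp (imp p s) f := fixneg p (imp p s) hpe
    have hfin : p ≤ s := by
      calc p = p * 1 := (mul_one p).symm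
        _ = p * t := by rw [h1]
        _ ≤ p * imp (imp p s) f := mono _ htd
        _ ≤ imp (imp p s) f := hpd
        _ ≤ s := hd_le_s
    exact absurd hfin (not_le_of_gt hsp)
  have key : ∀ x y : X, imp x x ≤ imp y y →
      imp (x * y) (x * y) = imp y y := by
    intro x y hxy
    have hr : imp y y ≤ imp (x * y) (x * y) := by
      rw [mul_comm x y]
      exact tau_prod_ge y x
    rcases le_or_gt (imp (x * y) (x * y)) (imp y y) with hle | hlt
    · exact le_antisymm hle hr
    · exfalso
      have hpt : t ≤ imp (x * y) (x * y) := taupos _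
      have hpp := tau_idem (x * y)
      have hwp : imp (x * y) (x * y) * (x * y) = x * y := taumul (x * y)
      have e3 : imp (x * y) (x * y) * ((x * imp x f) * (y * imp y f))
          = (x * imp x f) * (y * imp y f) := by
        have h' : imp (x * y) (x * y) * ((x * imp x f) * (y * imp y f))
            = (imp (x * y) (x * y) * (x * y)) * (imp x f * imp y f) := by
          simp only [mul_assoc, mul_left_comm, mul_comm]
        rw [h', hwp]
        simp only [mul_assoc, mul_left_comm, mul_comm]
      have hprod : imp (imp x x) f * imp (imp y y) f ≤ f := by
        calc imp (imp x x) f * imp (imp y y) f ≤ t * t :=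
              mono2 (posneg _ (taupos x)) (posneg _ (taupos y))
          _ = t := by rw [← h1, one_mul]
          _ = f := hodd
      have e4 : imp (imp x x) f * imp (imp y y) f
          ≤ imp (imp (x * y) (x * y)) f := by
        rw [← xxp x, ← xxp y]
        apply (negf (imp (x * y) (x * y)) _).1
        rw [e3, xxp x, xxp y]
        exact hprod
      have hq : imp (imp y y) f * imp (imp y y) f
          ≤ imp (imp (x * y) (x * y)) f :=
        le_trans (monoL _ (anti hxy)) e4
      have hfinal : imp (x * y) (x * y) * imp (imp y y) f ≤ imp y y := by
        have h8 : imp (imp y y) f * (imp (x * y) (x * y) * imp (imp y y) f) ≤ f := by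
          calc imp (imp y y) f * (imp (x * y) (x * y) * imp (imp y y) f)
              = imp (x * y) (x * y) * (imp (imp y y) f * imp (imp y y) f) := by
                simp only [mul_assoc, mul_left_comm, mul_comm]
            _ ≤ imp (x * y) (x * y) * imp (imp (x * y) (x * y)) f := mono _ hq
            _ ≤ f := (negf _ _).2 le_rfl
        have h9 := (negf (imp (imp y y) f) _).1 h8
        rwa [NN] at h9
      exact contra (imp y y) (imp (x * y) (x * y)) hpt hpp hlt hfinal
  obtain ⟨C, hCdef⟩ : ∃ C : Finset X, C = (insert t S).image (fun z => imp z z) :=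
    ⟨_, rfl⟩
  have htC : imp t t ∈ C := by
    rw [hCdef]
    exact Finset.mem_image.2 ⟨t, Finset.mem_insert_self _ _, rfl⟩
  have hC : ∀ z : X, imp z z ∈ C := by
    have hP : {v : X | imp v v ∈ C} = Set.univ := by
      apply hgen
      · intro g hg
        show imp g g ∈ C
        rw [hCdef]
        exact Finset.mem_image.2 ⟨g, Finset.mem_insert_of_mem (Finset.mem_coe.mp hg), rfl⟩
      · exact htC
      · show imp f f ∈ C
        rw [← hodd]
        exact htC
      · intro a ha b hb
        show imp (a * b) (a * b) ∈ C
        rcases le_total (imp a a) (imp b b) with h | h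
        · rw [key a b h]; exact hb
        · have hk := key b a h
          rw [mul_comm b a] at hk
          rw [hk]; exact ha
      · intro a ha b hb
        show imp (imp a b) (imp a b) ∈ C
        rw [impeq a b, tauneg (a * imp b f)]
        rcases le_total (imp a a) (imp (imp b f) (imp b f)) with h | h
        · rw [key a (imp b f) h, tauneg b]; exact hb
        · have hk := key (imp b f) a h
          rw [mul_comm (imp b f) a] at hk
          rw [hk]; exact ha
      · intro a ha b hb
        rcases le_total a b with h | h
        · rw [inf_eq_left.2 h]; exact ha
        · rw [inf_eq_right.2 h]; exact hb
      · intro a ha b hb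
        rcases le_total a b with h | h
        · rw [sup_eq_right.2 h]; exact hb
        · rw [sup_eq_left.2 h]; exact ha
    intro z
    have hz : z ∈ {v : X | imp v v ∈ C} := by
      rw [hP]
      exact Set.mem_univ z
    exact hz
  have hpi : ∀ p : X, t ≤ p → p * p = p → imp p p = p := by
    intro p h1p h2p
    apply le_antisymm
    · have h' : imp p f ≤ imp (imp p p) f := by
        rw [← xxp p]
        calc imp p f = 1 * imp p f := (one_mul _).symm
          _ ≤ p * imp p f := monoL _ (h1.trans_le h1p)
      exact anti' h'
    · exact (R p p p).1 (le_of_eq h2p)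
  have hfin : {p : X | t ≤ p ∧ mul p p = p} ⊆ (C : Set X) := by
    rintro p ⟨h1p, h2p⟩
    have hCp := hC p
    rw [hpi p h1p h2p] at hCp
    exact hCp
  exact Set.Finite.subset C.finite_toSet hfin
end

section
/- Let A and D be linearly ordered sets, both order isomorphic to ℝ, let H be a countable subset of A, and let C = (H × (D ∪ {⊤, ⊥})) ∪ ((A \ H) × {⊥}), ordered lexicographically, where ⊥ < d < ⊤ for all d ∈ D. Then C is order isomorphic to ℝ. -/
open Set

/-- A nonempty, densely ordered, unbounded, separable, Dedekind complete linear
order is order isomorphic to ℝ. -/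
theorem iso_real {X : Type*} [LinearOrder X] [Nonempty X] [DenselyOrdered X]
    [NoMinOrder X] [NoMaxOrder X]
    (sep : ∃ S : Set X, S.Countable ∧ ∀ x y : X, x < y → ∃ s ∈ S, x < s ∧ s < y)
    (dc : ∀ T : Set X, T.Nonempty → BddAbove T → ∃ x, IsLUB T x) :
    Nonempty (X ≃o ℝ) := by
  obtain ⟨S, hSc, hSd⟩ := sep
  -- S is nonempty
  obtain ⟨x0⟩ := ‹Nonempty X›
  obtain ⟨x1, hx1⟩ := exists_gt x0
  obtain ⟨s0, hs0S, _, _⟩ := hSd _ _ hx1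
  haveI : Nonempty S := ⟨⟨s0, hs0S⟩⟩
  haveI : Countable S := hSc.to_subtype
  haveI : DenselyOrdered S := by
    constructor
    rintro ⟨a, ha⟩ ⟨b, hb⟩ hab
    obtain ⟨c, hc⟩ := exists_between (show a < b from hab)
    obtain ⟨s, hsS, h1, h2⟩ := hSd _ _ hc.1
    exact ⟨⟨s, hsS⟩, h1, h2.trans hc.2⟩
  haveI : NoMaxOrder S := by
    constructor
    rintro ⟨a, ha⟩
    obtain ⟨y, hy⟩ := exists_gt a
    obtain ⟨z, hz⟩ := exists_gt y
    obtain ⟨s, hsS, h1, _⟩ := hSd _ _ hz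
    exact ⟨⟨s, hsS⟩, hy.trans h1⟩
  haveI : NoMinOrder S := by
    constructor
    rintro ⟨a, ha⟩
    obtain ⟨y, hy⟩ := exists_lt a
    obtain ⟨z, hz⟩ := exists_lt y
    obtain ⟨s, hsS, _, h2⟩ := hSd _ _ hz
    exact ⟨⟨s, hsS⟩, h2.trans hy⟩
  obtain ⟨e⟩ := Order.iso_of_countable_dense S ℚ
  set φ : ℚ → X := fun q => (e.symm q : X) with hφ
  have φmono : StrictMono φ := fun q q' h => e.symm.strictMono h
  have φlt : ∀ q q', φ q < φ q' ↔ q < q' := fun q q' =>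
    ⟨fun h => by simpa using e.symm.lt_iff_lt.mp h, fun h => φmono h⟩
  -- density properties of φ
  have P3 : ∀ x y : X, x < y → ∃ q, x < φ q ∧ φ q < y := by
    intro x y h
    obtain ⟨s, hsS, h1, h2⟩ := hSd _ _ h
    exact ⟨e ⟨s, hsS⟩, by simpa [hφ] using h1, by simpa [hφ] using h2⟩
  have P1 : ∀ x : X, ∃ q, φ q < x := by
    intro x
    obtain ⟨y, hy⟩ := exists_lt x
    obtain ⟨q, _, h2⟩ := P3 y x hy
    exact ⟨q, h2⟩
  have P2 : ∀ x : X, ∃ q, x < φ q := by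
    intro x
    obtain ⟨y, hy⟩ := exists_gt x
    obtain ⟨q, h1, _⟩ := P3 x y hy
    exact ⟨q, h1⟩
  set g : X → ℝ := fun x => sSup ((fun q : ℚ => (q : ℝ)) '' {q | φ q < x}) with hg
  have hne : ∀ x : X, ((fun q : ℚ => (q : ℝ)) '' {q | φ q < x}).Nonempty := by
    intro x
    obtain ⟨q, hq⟩ := P1 x
    exact ⟨q, q, hq, rfl⟩
  have hbdd : ∀ x : X, BddAbove ((fun q : ℚ => (q : ℝ)) '' {q | φ q < x}) := by
    intro x
    obtain ⟨q', hq'⟩ := P2 x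
    refine ⟨(q' : ℝ), ?_⟩
    rintro r ⟨q, hq, rfl⟩
    show (q:ℝ) ≤ (q':ℝ)
    exact_mod_cast le_of_lt ((φlt q q').mp (hq.trans hq'))
  have gmono : StrictMono g := by
    intro x y hxy
    obtain ⟨q1, hq1x, hq1y⟩ := P3 x y hxy
    obtain ⟨q2, hq2a, hq2b⟩ := P3 (φ q1) y hq1y
    have h1 : g x ≤ (q1 : ℝ) := by
      apply csSup_le (hne x)
      rintro r ⟨q, hq, rfl⟩
      show (q:ℝ) ≤ (q1:ℝ)
      exact_mod_cast le_of_lt ((φlt q q1).mp (hq.trans hq1x))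
    have h2 : (q2 : ℝ) ≤ g y := le_csSup (hbdd y) ⟨q2, hq2b, rfl⟩
    have h3 : (q1 : ℝ) < (q2 : ℝ) := by exact_mod_cast (φlt q1 q2).mp hq2a
    exact lt_of_le_of_lt h1 (lt_of_lt_of_le h3 h2)
  have gsurj : Function.Surjective g := by
    intro r
    obtain ⟨qlo, hqlo⟩ := exists_rat_lt r
    obtain ⟨qhi, hqhi⟩ := exists_rat_gt r
    set T : Set X := φ '' {q : ℚ | (q : ℝ) < r} with hT
    have hTne : T.Nonempty := ⟨φ qlo, qlo, hqlo, rfl⟩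
    have hTbdd : BddAbove T := by
      refine ⟨φ qhi, ?_⟩
      rintro x ⟨q, hq, rfl⟩
      exact le_of_lt (φmono (by exact_mod_cast hq.trans hqhi))
    obtain ⟨x0, hx0⟩ := dc T hTne hTbdd
    refine ⟨x0, ?_⟩
    apply le_antisymm
    · apply csSup_le (hne x0)
      rintro s ⟨q, hq, rfl⟩
      by_contra hc
      push_neg at hc
      have : φ q ∈ upperBounds T := by
        rintro x ⟨q', hq', rfl⟩
        exact le_of_lt (φmono (by exact_mod_cast hq'.trans hc))
      exact absurd (hx0.2 this) (not_le.mpr hq)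
    · by_contra hc
      push_neg at hc
      obtain ⟨q, hq1, hq2⟩ := exists_rat_btwn hc
      obtain ⟨q', hq'1, hq'2⟩ := exists_rat_btwn hq2
      have hq'q : q < q' := by exact_mod_cast hq'1
      have : φ q' ∈ T := ⟨q', hq'2, rfl⟩
      have hle : φ q' ≤ x0 := hx0.1 this
      have : φ q < x0 := lt_of_lt_of_le (φmono hq'q) hle
      have : (q : ℝ) ≤ g x0 := le_csSup (hbdd x0) ⟨q, this, rfl⟩
      exact absurd hq1 (not_lt.mpr this)
  exact ⟨StrictMono.orderIsoOfSurjective g gmono gsurj⟩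

open Set

/-- In `WithBot (WithTop D)` with `D` Dedekind complete, every nonempty set has a lub. -/
theorem wbt_lub {D : Type*} [LinearOrder D]
    (dc : ∀ T : Set D, T.Nonempty → BddAbove T → ∃ x, IsLUB T x)
    (W : Set (WithBot (WithTop D))) (_hW : W.Nonempty) : ∃ w, IsLUB W w := by
  classical
  set W2 : Set D := {d | (((d : WithTop D) : WithBot (WithTop D))) ∈ W} with hW2
  by_cases htop : ((⊤ : WithTop D) : WithBot (WithTop D)) ∈ W
  · exact ⟨((⊤ : WithTop D) : WithBot (WithTop D)),
      fun w _ => le_top, fun u hu => hu htop⟩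
  by_cases hW2ne : W2.Nonempty
  · by_cases hW2b : BddAbove W2
    · obtain ⟨d0, hd0⟩ := dc W2 hW2ne hW2b
      refine ⟨((d0 : WithTop D) : WithBot (WithTop D)), ?_, ?_⟩
      · intro w hw
        induction w using WithBot.recBotCoe with
        | bot => exact bot_le
        | coe x =>
          induction x using WithTop.recTopCoe with
          | top => exact absurd hw htop
          | coe d =>
            exact WithBot.coe_le_coe.mpr (WithTop.coe_le_coe.mpr (hd0.1 hw))
      · intro u hu
        obtain ⟨d1, hd1⟩ := hW2ne
        have hle : ((d1 : WithTop D) : WithBot (WithTop D)) ≤ u := hu hd1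
        induction u using WithBot.recBotCoe with
        | bot => exact absurd hle (by simp)
        | coe x =>
          induction x using WithTop.recTopCoe with
          | top => exact le_top
          | coe d2 =>
            refine WithBot.coe_le_coe.mpr (WithTop.coe_le_coe.mpr (hd0.2 ?_))
            intro d hd
            exact WithTop.coe_le_coe.mp (WithBot.coe_le_coe.mp (hu hd))
    · refine ⟨((⊤ : WithTop D) : WithBot (WithTop D)), fun w _ => le_top, ?_⟩
      intro u hu
      obtain ⟨d1, hd1⟩ := hW2ne
      have hle : ((d1 : WithTop D) : WithBot (WithTop D)) ≤ u := hu hd1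
      induction u using WithBot.recBotCoe with
      | bot => exact absurd hle (by simp)
      | coe x =>
        induction x using WithTop.recTopCoe with
        | top => exact le_rfl
        | coe d2 =>
          exfalso
          apply hW2b
          refine ⟨d2, fun d hd => ?_⟩
          exact WithTop.coe_le_coe.mp (WithBot.coe_le_coe.mp (hu hd))
  · -- W ⊆ {⊥}
    refine ⟨⊥, ?_, fun u _ => bot_le⟩
    intro w hw
    induction w using WithBot.recBotCoe with
    | bot => exact le_rfl
    | coe x =>
      induction x using WithTop.recTopCoe with
      | top => exact absurd hw htop
      | coe d => exact absurd ⟨d, hw⟩ hW2ne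

open Set

section helpers

variable {X : Type*} [LinearOrder X]

/-- Transfer of Dedekind completeness along an order iso to ℝ. -/
theorem dc_of_iso (e : X ≃o ℝ) :
    ∀ T : Set X, T.Nonempty → BddAbove T → ∃ x, IsLUB T x := by
  intro T hne hbdd
  obtain ⟨b, hb⟩ := hbdd
  have h1 : (e '' T).Nonempty := hne.image e
  have h2 : BddAbove (e '' T) := by
    refine ⟨e b, ?_⟩
    rintro r ⟨t, ht, rfl⟩
    exact e.le_iff_le.mpr (hb ht)
  obtain ⟨r, hr⟩ := Real.exists_isLUB h1 h2
  exact ⟨e.symm r, e.isLUB_image.mp hr⟩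

theorem props_of_iso (e : X ≃o ℝ) :
    Nonempty X ∧ (∀ x : X, ∃ y, x < y) ∧ (∀ x : X, ∃ y, y < x) ∧
      (∀ x y : X, x < y → ∃ z, x < z ∧ z < y) := by
  refine ⟨⟨e.symm 0⟩, fun x => ⟨e.symm (e x + 1), ?_⟩, fun x => ⟨e.symm (e x - 1), ?_⟩,
    fun x y h => ?_⟩
  · have := e.symm.strictMono (lt_add_one (e x))
    simpa using this
  · have := e.symm.strictMono (sub_one_lt (e x))
    simpa using this
  · obtain ⟨r, hr1, hr2⟩ := exists_between (e.strictMono h)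
    refine ⟨e.symm r, ?_, ?_⟩
    · have := e.symm.strictMono hr1; simpa using this
    · have := e.symm.strictMono hr2; simpa using this

/-- Countable dense-with-side-approximation set from an iso with ℝ. -/
theorem sep_of_iso (e : X ≃o ℝ) :
    ∃ S : Set X, S.Countable ∧ (∀ x y : X, x < y → ∃ s ∈ S, x < s ∧ s < y) ∧
      (∀ x : X, ∃ s ∈ S, s < x) ∧ (∀ x : X, ∃ s ∈ S, x < s) := by
  refine ⟨e ⁻¹' (range ((↑) : ℚ → ℝ)), (countable_range _).preimage e.injective, ?_, ?_, ?_⟩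
  · intro x y h
    obtain ⟨q, hq1, hq2⟩ := exists_rat_btwn (e.strictMono h)
    refine ⟨e.symm q, by simp, ?_, ?_⟩
    · have := e.symm.strictMono hq1; simpa using this
    · have := e.symm.strictMono hq2; simpa using this
  · intro x
    obtain ⟨q, hq⟩ := exists_rat_lt (e x)
    refine ⟨e.symm q, by simp, ?_⟩
    have := e.symm.strictMono hq; simpa using this
  · intro x
    obtain ⟨q, hq⟩ := exists_rat_gt (e x)
    refine ⟨e.symm q, by simp, ?_⟩
    have := e.symm.strictMono hq; simpa using this

end helpers

/-- If A and D are order isomorphic to ℝ and H ⊆ A is countable, then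
C = (H × (D ∪ {⊤,⊥})) ∪ ((A \ H) × {⊥}) with the lexicographic order is
order isomorphic to ℝ. -/
theorem stmt12 {A D : Type*} [LinearOrder A] [LinearOrder D]
    (hA : Nonempty (A ≃o ℝ)) (hD : Nonempty (D ≃o ℝ))
    (H : Set A) (hH : H.Countable) :
    Nonempty
      ({p : Lex (A × WithBot (WithTop D)) //
          (ofLex p).1 ∈ H ∨ (ofLex p).2 = ⊥} ≃o ℝ) := by
  classical
  obtain ⟨eA⟩ := hA
  obtain ⟨eD⟩ := hD
  obtain ⟨hAne, hAgt, hAlt, hAdense⟩ := props_of_iso eA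
  obtain ⟨hDne, hDgt, hDlt, hDdense⟩ := props_of_iso eD
  have dcA := dc_of_iso eA
  have dcD := dc_of_iso eD
  obtain ⟨SA, hSAc, hSAd, hSAlt, hSAgt⟩ := sep_of_iso eA
  obtain ⟨QD, hQDc, hQDd, hQDlt, hQDgt⟩ := sep_of_iso eD
  set C := {p : Lex (A × WithBot (WithTop D)) //
      (ofLex p).1 ∈ H ∨ (ofLex p).2 = ⊥} with hC
  -- basic lex order facts
  have lex_le : ∀ p q : C, p ≤ q ↔ ((ofLex p.val).1 < (ofLex q.val).1 ∨
      ((ofLex p.val).1 = (ofLex q.val).1 ∧ (ofLex p.val).2 ≤ (ofLex q.val).2)) := by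
    intro p q
    rw [← Subtype.coe_le_coe]
    exact Prod.Lex.le_iff
  have lex_lt : ∀ p q : C, p < q ↔ ((ofLex p.val).1 < (ofLex q.val).1 ∨
      ((ofLex p.val).1 = (ofLex q.val).1 ∧ (ofLex p.val).2 < (ofLex q.val).2)) := by
    intro p q
    rw [← Subtype.coe_lt_coe]
    exact Prod.Lex.lt_iff
  have fst_mono : ∀ p q : C, p ≤ q → (ofLex p.val).1 ≤ (ofLex q.val).1 := by
    intro p q h
    rcases (lex_le p q).mp h with h | ⟨h, _⟩
    · exact le_of_lt h
    · exact le_of_eq h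
  haveI : Nonempty C := by
    obtain ⟨a0⟩ := hAne
    exact ⟨⟨toLex (a0, ⊥), Or.inr rfl⟩⟩
  haveI : NoMaxOrder C := by
    constructor
    intro p
    obtain ⟨a', ha'⟩ := hAgt (ofLex p.val).1
    exact ⟨⟨toLex (a', ⊥), Or.inr rfl⟩, (lex_lt _ _).mpr (Or.inl ha')⟩
  haveI : NoMinOrder C := by
    constructor
    intro p
    obtain ⟨a', ha'⟩ := hAlt (ofLex p.val).1
    exact ⟨⟨toLex (a', ⊥), Or.inr rfl⟩, (lex_lt _ _).mpr (Or.inl ha')⟩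
  -- density of rationals in WithBot (WithTop D)
  have hQDne : QD.Nonempty := by
    obtain ⟨d0⟩ := hDne
    obtain ⟨q, hq, _⟩ := hQDlt d0
    exact ⟨q, hq⟩
  have dense_wbt : ∀ w v : WithBot (WithTop D), w < v →
      ∃ q ∈ QD, w < (((q : WithTop D) : WithBot (WithTop D))) ∧
        (((q : WithTop D) : WithBot (WithTop D))) < v := by
    intro w v h
    induction w using WithBot.recBotCoe with
    | bot =>
      induction v using WithBot.recBotCoe with
      | bot => exact absurd h (lt_irrefl _)
      | coe x =>
        induction x using WithTop.recTopCoe with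
        | top =>
          obtain ⟨q, hq⟩ := hQDne
          exact ⟨q, hq, WithBot.bot_lt_coe _,
            WithBot.coe_lt_coe.mpr (WithTop.coe_lt_top q)⟩
        | coe d =>
          obtain ⟨q, hq, hq2⟩ := hQDlt d
          exact ⟨q, hq, WithBot.bot_lt_coe _,
            WithBot.coe_lt_coe.mpr (WithTop.coe_lt_coe.mpr hq2)⟩
    | coe x =>
      induction x using WithTop.recTopCoe with
      | top =>
        exfalso
        induction v using WithBot.recBotCoe with
        | bot => exact absurd h (by simp)
        | coe y => exact absurd (WithBot.coe_lt_coe.mp h) not_top_lt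
      | coe d1 =>
        induction v using WithBot.recBotCoe with
        | bot => exact absurd h (by simp)
        | coe y =>
          induction y using WithTop.recTopCoe with
          | top =>
            obtain ⟨q, hq, hq2⟩ := hQDgt d1
            exact ⟨q, hq, WithBot.coe_lt_coe.mpr (WithTop.coe_lt_coe.mpr hq2),
              WithBot.coe_lt_coe.mpr (WithTop.coe_lt_top q)⟩
          | coe d2 =>
            obtain ⟨q, hq, hq1, hq2⟩ := hQDd d1 d2
              (WithTop.coe_lt_coe.mp (WithBot.coe_lt_coe.mp h))
            exact ⟨q, hq, WithBot.coe_lt_coe.mpr (WithTop.coe_lt_coe.mpr hq1),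
              WithBot.coe_lt_coe.mpr (WithTop.coe_lt_coe.mpr hq2)⟩
  -- the countable dense set in C
  set SC : Set C := {p | ((ofLex p.val).2 = ⊥ ∧ (ofLex p.val).1 ∈ SA) ∨
      ∃ q ∈ QD, (ofLex p.val).2 = (((q : WithTop D) : WithBot (WithTop D)))} with hSC
  have key : ∀ p q : C, p < q → ∃ m ∈ SC, p < m ∧ m < q := by
    intro p q hpq
    rcases (lex_lt p q).mp hpq with hab | ⟨hab, hwv⟩
    · obtain ⟨s, hsSA, h1, h2⟩ := hSAd _ _ hab
      refine ⟨⟨toLex (s, ⊥), Or.inr rfl⟩, Or.inl ⟨rfl, hsSA⟩, ?_, ?_⟩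
      · exact (lex_lt _ _).mpr (Or.inl h1)
      · exact (lex_lt _ _).mpr (Or.inl h2)
    · have haH : (ofLex p.val).1 ∈ H := by
        rcases p.2 with h | h
        · exact h
        · rcases q.2 with h' | h'
          · rw [hab]; exact h'
          · rw [h] at hwv; rw [h'] at hwv; exact absurd hwv (lt_irrefl _)
      obtain ⟨q0, hq0, h1, h2⟩ := dense_wbt _ _ hwv
      refine ⟨⟨toLex ((ofLex p.val).1, ((q0 : WithTop D) : WithBot (WithTop D))),
        Or.inl haH⟩, Or.inr ⟨q0, hq0, rfl⟩, ?_, ?_⟩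
      · exact (lex_lt _ _).mpr (Or.inr ⟨rfl, h1⟩)
      · exact (lex_lt _ _).mpr (Or.inr ⟨hab, h2⟩)
  have hSCc : SC.Countable := by
    have hK : ((SA ×ˢ ({(⊥ : WithBot (WithTop D))} : Set _)) ∪
        (H ×ˢ ((fun d : D => (((d : WithTop D) : WithBot (WithTop D)))) '' QD))).Countable :=
      (hSAc.prod (countable_singleton _)).union (hH.prod (hQDc.image _))
    have hinj : Function.Injective (fun p : C => ofLex p.val) :=
      fun p q h => Subtype.ext (ofLex.injective h)
    refine (hK.preimage hinj).mono ?_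
    intro p hp
    rcases hp with ⟨hb, hs⟩ | ⟨q0, hq0, he⟩
    · exact Or.inl ⟨hs, hb⟩
    · refine Or.inr ⟨?_, ⟨q0, hq0, he.symm⟩⟩
      rcases p.2 with h | h
      · exact h
      · rw [he] at h; exact absurd h (by simp)
  haveI : DenselyOrdered C := by
    constructor
    intro p q h
    obtain ⟨m, _, h1, h2⟩ := key p q h
    exact ⟨m, h1, h2⟩
  have dcC : ∀ T : Set C, T.Nonempty → BddAbove T → ∃ x, IsLUB T x := by
    intro T hTne hTbdd
    obtain ⟨bnd, hbnd⟩ := hTbdd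
    set T1 : Set A := (fun p : C => (ofLex p.val).1) '' T with hT1
    have hT1ne : T1.Nonempty := hTne.image _
    have hT1b : BddAbove T1 := by
      refine ⟨(ofLex bnd.val).1, ?_⟩
      rintro a ⟨t, ht, rfl⟩
      exact fst_mono t bnd (hbnd ht)
    obtain ⟨a0, ha0⟩ := dcA T1 hT1ne hT1b
    have hub : ∀ u : C, u ∈ upperBounds T → a0 ≤ (ofLex u.val).1 := by
      intro u hu
      apply ha0.2
      rintro a ⟨t, ht, rfl⟩
      exact fst_mono t u (hu ht)
    by_cases hmem : ∃ t ∈ T, (ofLex t.val).1 = a0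
    · by_cases haH : a0 ∈ H
      · set W : Set (WithBot (WithTop D)) :=
          (fun t : C => (ofLex t.val).2) '' {t ∈ T | (ofLex t.val).1 = a0} with hW
        have hWne : W.Nonempty := by
          obtain ⟨t0, ht0, ha⟩ := hmem
          exact ⟨_, ⟨t0, ⟨ht0, ha⟩, rfl⟩⟩
        obtain ⟨w0, hw0⟩ := wbt_lub dcD W hWne
        refine ⟨⟨toLex (a0, w0), Or.inl haH⟩, ?_, ?_⟩
        · intro t ht
          rcases lt_or_eq_of_le (ha0.1 ⟨t, ht, rfl⟩) with h | h
          · exact (lex_le _ _).mpr (Or.inl h)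
          · exact (lex_le _ _).mpr (Or.inr ⟨h, hw0.1 ⟨t, ⟨ht, h⟩, rfl⟩⟩)
        · intro u hu
          rcases lt_or_eq_of_le (hub u hu) with h | h
          · exact (lex_le _ _).mpr (Or.inl h)
          · refine (lex_le _ _).mpr (Or.inr ⟨h, ?_⟩)
            apply hw0.2
            rintro w ⟨t, ⟨ht, hta⟩, rfl⟩
            rcases (lex_le t u).mp (hu ht) with h' | ⟨_, h'⟩
            · rw [hta, ← h] at h'
              exact absurd h' (lt_irrefl _)
            · exact h'
      · refine ⟨⟨toLex (a0, ⊥), Or.inr rfl⟩, ?_, ?_⟩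
        · intro t ht
          rcases lt_or_eq_of_le (ha0.1 ⟨t, ht, rfl⟩) with h | h
          · exact (lex_le _ _).mpr (Or.inl h)
          · refine (lex_le _ _).mpr (Or.inr ⟨h, ?_⟩)
            have h2 : (ofLex t.val).1 = a0 := h
            rcases t.2 with h' | h'
            · rw [h2] at h'
              exact absurd h' haH
            · rw [h']
              exact bot_le
        · intro u hu
          rcases lt_or_eq_of_le (hub u hu) with h | h
          · exact (lex_le _ _).mpr (Or.inl h)
          · exact (lex_le _ _).mpr (Or.inr ⟨h, bot_le⟩)
    · push_neg at hmem
      refine ⟨⟨toLex (a0, ⊥), Or.inr rfl⟩, ?_, ?_⟩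
      · intro t ht
        have hlt : (ofLex t.val).1 < a0 :=
          lt_of_le_of_ne (ha0.1 ⟨t, ht, rfl⟩) (hmem t ht)
        exact (lex_le _ _).mpr (Or.inl hlt)
      · intro u hu
        rcases lt_or_eq_of_le (hub u hu) with h | h
        · exact (lex_le _ _).mpr (Or.inl h)
        · exact (lex_le _ _).mpr (Or.inr ⟨h, bot_le⟩)
  exact iso_real ⟨SC, hSCc, key⟩ dcC
end

section
/- Let A be a linearly ordered set order isomorphic to ℝ, let H ⊆ A be countable, and let L be a countable linearly ordered set with no least and no greatest element that is Dedekind complete (e.g., order isomorphic to ℤ). Let W = (H × (L ∪ {⊤, ⊥})) ∪ ((A \ H) × {⊥}) with lexicographic order. Then W is Dedekind complete. -/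
theorem fiber_lub {L : Type*} [LinearOrder L]
    (hL : ∀ S : Set L, S.Nonempty → BddAbove S → ∃ m, IsLUB S m)
    (T : Set (WithBot (WithTop L))) : ∃ x, IsLUB T x := by
  classical
  set T' : Set L := {l | ((l : WithTop L) : WithBot (WithTop L)) ∈ T} with hT'
  by_cases htop : (⊤ : WithBot (WithTop L)) ∈ T
  · exact ⟨⊤, fun t _ => le_top, fun u hu => hu htop⟩
  by_cases hne : T'.Nonempty
  · by_cases hbdd : BddAbove T'
    · obtain ⟨m, hm⟩ := hL T' hne hbdd
      refine ⟨((m : WithTop L) : WithBot (WithTop L)), ?_, ?_⟩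
      · rintro t ht
        induction t using WithBot.recBotCoe with
        | bot => exact bot_le
        | coe y =>
          induction y using WithTop.recTopCoe with
          | top => exact absurd ht htop
          | coe l =>
            have : l ∈ T' := ht
            exact_mod_cast hm.1 this
      · intro u hu
        induction u using WithBot.recBotCoe with
        | bot =>
          obtain ⟨l, hl⟩ := hne
          exact absurd (hu hl) (by simp)
        | coe y =>
          induction y using WithTop.recTopCoe with
          | top => exact le_top
          | coe l =>
            have : l ∈ upperBounds T' := by
              intro l' hl'
              exact_mod_cast hu hl'
            exact_mod_cast hm.2 this
    · refine ⟨⊤, fun t _ => le_top, ?_⟩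
      intro u hu
      induction u using WithBot.recBotCoe with
      | bot =>
        obtain ⟨l, hl⟩ := hne
        exact absurd (hu hl) (by simp)
      | coe y =>
        induction y using WithTop.recTopCoe with
        | top => exact le_refl _
        | coe l =>
          exfalso
          exact hbdd ⟨l, fun l' hl' => by exact_mod_cast hu hl'⟩
  · refine ⟨⊥, ?_, fun u _ => bot_le⟩
    rintro t ht
    induction t using WithBot.recBotCoe with
    | bot => exact le_refl _
    | coe y =>
      induction y using WithTop.recTopCoe with
      | top => exact absurd ht htop
      | coe l => exact absurd ⟨l, ht⟩ hne

/-- If A is order isomorphic to ℝ, H ⊆ A countable, and L is a countable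
Dedekind-complete linear order with no least and no greatest element, then
W = (H × (L ∪ {⊤,⊥})) ∪ ((A \ H) × {⊥}) with lexicographic order is
Dedekind complete. -/
theorem stmt13 {A L : Type*} [LinearOrder A] [LinearOrder L]
    [Countable L] [NoMinOrder L] [NoMaxOrder L]
    (hA : Nonempty (A ≃o ℝ)) (H : Set A) (hH : H.Countable)
    (hL : ∀ S : Set L, S.Nonempty → BddAbove S → ∃ m, IsLUB S m) :
    ∀ S : Set {p : Lex (A × WithBot (WithTop L)) //
        (ofLex p).1 ∈ H ∨ (ofLex p).2 = ⊥},
      S.Nonempty → BddAbove S → ∃ m, IsLUB S m := by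
  classical
  obtain ⟨ι⟩ := hA
  intro S hS hBdd
  have le_iff : ∀ p q : {p : Lex (A × WithBot (WithTop L)) //
      (ofLex p).1 ∈ H ∨ (ofLex p).2 = ⊥}, p ≤ q ↔
      ((ofLex p.val).1 < (ofLex q.val).1 ∨
        ((ofLex p.val).1 = (ofLex q.val).1 ∧ (ofLex p.val).2 ≤ (ofLex q.val).2)) :=
    fun p q => Prod.Lex.le_iff (x := p.val) (y := q.val)
  set F : Set A := (fun p => (ofLex p.val).1) '' S with hFdef
  have hFne : F.Nonempty := hS.image _
  have hFbdd : BddAbove F := by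
    obtain ⟨b, hb⟩ := hBdd
    refine ⟨(ofLex b.val).1, ?_⟩
    rintro _ ⟨p, hp, rfl⟩
    rcases (le_iff p b).1 (hb hp) with h | h
    · exact h.le
    · exact h.1.le
  have haex : ∃ a : A, IsLUB F a := by
    refine ⟨ι.symm (sSup (ι '' F)), ?_⟩
    rw [← ι.isLUB_image]
    exact Real.isLUB_sSup (hFne.image _) (ι.monotone.map_bddAbove hFbdd)
  obtain ⟨a, ha⟩ := haex
  set T : Set (WithBot (WithTop L)) :=
    (fun p => (ofLex p.val).2) '' {p | p ∈ S ∧ (ofLex p.val).1 = a} with hTdef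
  obtain ⟨x, hx⟩ := fiber_lub hL T
  have hmem : (ofLex (toLex (a, x))).1 ∈ H ∨ (ofLex (toLex (a, x))).2 = ⊥ := by
    by_cases haH : a ∈ H
    · exact Or.inl haH
    · right
      show x = ⊥
      refine le_antisymm (hx.2 ?_) bot_le
      rintro _ ⟨p, ⟨hpS, hpa⟩, rfl⟩
      rcases p.prop with h | h
      · exact absurd (hpa ▸ h) haH
      · exact h.le
  refine ⟨⟨toLex (a, x), hmem⟩, ?_, ?_⟩
  · intro p hp
    rw [le_iff]
    rcases lt_or_eq_of_le (ha.1 ⟨p, hp, rfl⟩) with h | h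
    · exact Or.inl h
    · exact Or.inr ⟨h, hx.1 ⟨p, ⟨hp, h⟩, rfl⟩⟩
  · intro q hq
    have haq : a ≤ (ofLex q.val).1 := by
      apply ha.2
      rintro _ ⟨p, hp, rfl⟩
      rcases (le_iff p q).1 (hq hp) with h | h
      · exact h.le
      · exact h.1.le
    rw [le_iff]
    rcases lt_or_eq_of_le haq with h | h
    · exact Or.inl h
    · refine Or.inr ⟨h, hx.2 ?_⟩
      rintro _ ⟨p, ⟨hpS, hpa⟩, rfl⟩
      rcases (le_iff p q).1 (hq hpS) with h' | h'
      · rw [hpa, ← h] at h'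
        exact absurd h' (lt_irrefl _)
      · exact h'.2
end

section
/- Let Z be a linear order with a subset G ⊆ Z such that G is discretely embedded in Z (every g ∈ G has immediate successor and predecessor in Z, both lying in G), and suppose Z is Dedekind complete and between any element of Z \ G and any other element of Z there lies an element of G. Let R be a linear order isomorphic to ℝ, and let W = (Z × {⊤}) ∪ (G × R) with lexicographic order, where ⊤ is a new top element above all of R. Then W is Dedekind complete and densely ordered. -/
/-- Let G be discretely embedded in a Dedekind complete linear order Z such
that between any element of Z \ G and any other element there is an element of
G, and let R be order isomorphic to ℝ. Then W = (Z × {⊤}) ∪ (G × R) with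
lexicographic order is Dedekind complete and densely ordered. -/
theorem stmt14 {Z R : Type*} [LinearOrder Z] [LinearOrder R]
    (G : Set Z)
    (hdisc : ∀ g ∈ G, (∃ a ∈ G, a ⋖ g) ∧ (∃ b ∈ G, g ⋖ b))
    (hZdc : ∀ S : Set Z, S.Nonempty → BddAbove S → ∃ m, IsLUB S m)
    (hsep : ∀ x ∉ G, ∀ y : Z, y ≠ x → ∃ z ∈ G, (x < z ∧ z < y) ∨ (y < z ∧ z < x))
    (hR : Nonempty (R ≃o ℝ)) :
    (∀ S : Set {p : Lex (Z × WithTop R) // (ofLex p).2 = ⊤ ∨ (ofLex p).1 ∈ G},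
        S.Nonempty → BddAbove S → ∃ m, IsLUB S m) ∧
      DenselyOrdered
        {p : Lex (Z × WithTop R) // (ofLex p).2 = ⊤ ∨ (ofLex p).1 ∈ G} := by
  obtain ⟨e⟩ := hR
  -- basic order facts about R transferred from ℝ
  have Rcomp : ∀ T : Set R, T.Nonempty → BddAbove T → ∃ t, IsLUB T t := by
    intro T hne hbdd
    exact ⟨e.symm (sSup (e '' T)),
      e.isLUB_image.mp (isLUB_csSup (hne.image e) (e.monotone.map_bddAbove hbdd))⟩
  have RnoMax : ∀ x : R, ∃ y, x < y := fun x =>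
    ⟨e.symm (e x + 1), by rw [← e.lt_iff_lt, e.apply_symm_apply]; exact lt_add_one _⟩
  have RnoMin : ∀ x : R, ∃ y, y < x := fun x =>
    ⟨e.symm (e x - 1), by rw [← e.lt_iff_lt, e.apply_symm_apply]; exact sub_one_lt _⟩
  have Rdense : ∀ x y : R, x < y → ∃ z, x < z ∧ z < y := by
    intro x y h
    obtain ⟨m, h1, h2⟩ := exists_between (e.strictMono h)
    exact ⟨e.symm m, by rwa [← e.lt_iff_lt, e.apply_symm_apply], by rwa [← e.lt_iff_lt, e.apply_symm_apply]⟩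
  have r0 : R := e.symm 0
  -- order characterizations on the subtype
  have hlt : ∀ p q : {p : Lex (Z × WithTop R) // (ofLex p).2 = ⊤ ∨ (ofLex p).1 ∈ G},
      p < q ↔ ((ofLex p.1).1 < (ofLex q.1).1 ∨
        ((ofLex p.1).1 = (ofLex q.1).1 ∧ (ofLex p.1).2 < (ofLex q.1).2)) := by
    intro p q
    rw [← Subtype.coe_lt_coe]
    exact Prod.Lex.lt_iff
  have hle : ∀ p q : {p : Lex (Z × WithTop R) // (ofLex p).2 = ⊤ ∨ (ofLex p).1 ∈ G},
      p ≤ q ↔ ((ofLex p.1).1 < (ofLex q.1).1 ∨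
        ((ofLex p.1).1 = (ofLex q.1).1 ∧ (ofLex p.1).2 ≤ (ofLex q.1).2)) := by
    intro p q
    rw [← Subtype.coe_le_coe]
    exact Prod.Lex.le_iff
  constructor
  · -- Dedekind completeness
    intro S hSne hSbdd
    obtain ⟨m, hm⟩ := hZdc ((fun p => (ofLex p.1).1) '' S) (hSne.image _) (by
      obtain ⟨u, hu⟩ := hSbdd
      exact ⟨(ofLex u.1).1, by
        rintro _ ⟨q, hq, rfl⟩
        exact Prod.Lex.monotone_fst _ _ (Subtype.coe_le_coe.mpr (hu hq))⟩)
    have hub_first : ∀ q ∈ S, (ofLex q.1).1 ≤ m := fun q hq => hm.1 ⟨q, hq, rfl⟩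
    have hubA : ∀ u ∈ upperBounds S, m ≤ (ofLex u.1).1 := by
      intro u hu
      refine hm.2 ?_
      rintro _ ⟨q, hq, rfl⟩
      exact Prod.Lex.monotone_fst _ _ (Subtype.coe_le_coe.mpr (hu hq))
    by_cases hmS : (⟨toLex (m, (⊤ : WithTop R)), Or.inl rfl⟩ :
        {p : Lex (Z × WithTop R) // (ofLex p).2 = ⊤ ∨ (ofLex p).1 ∈ G}) ∈ S
    · -- (m, ⊤) is a member, hence the greatest element
      refine ⟨_, IsGreatest.isLUB ⟨hmS, fun q hq => ?_⟩⟩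
      rcases eq_or_lt_of_le (hub_first q hq) with h | h
      · exact (hle _ _).mpr (Or.inr ⟨h, le_top⟩)
      · exact (hle _ _).mpr (Or.inl h)
    · have key : ∀ q, q ∈ S → (ofLex q.1).1 = m → (ofLex q.1).2 ≠ ⊤ := by
        intro q hq h1 h2
        exact hmS ((Subtype.ext (congrArg toLex (Prod.ext h1 h2)) :
          q = ⟨toLex (m, (⊤ : WithTop R)), Or.inl rfl⟩) ▸ hq)
      by_cases hmA : m ∈ (fun p => (ofLex p.1).1) '' S
      · -- some element of S has first coordinate m
        obtain ⟨p0, hp0S, hp0⟩ := hmA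
        have hp0x := key p0 hp0S hp0
        have hmG : m ∈ G := hp0 ▸ p0.2.resolve_left hp0x
        obtain ⟨rr, hrr⟩ := WithTop.ne_top_iff_exists.mp hp0x
        have hrrT : (⟨toLex (m, (rr : WithTop R)), Or.inr hmG⟩ :
            {p : Lex (Z × WithTop R) // (ofLex p).2 = ⊤ ∨ (ofLex p).1 ∈ G}) ∈ S := by
          have : p0 = ⟨toLex (m, (rr : WithTop R)), Or.inr hmG⟩ :=
            Subtype.ext (congrArg toLex (Prod.ext hp0 hrr.symm))
          exact this ▸ hp0S
        by_cases hT : BddAbove {r : R | (⟨toLex (m, (r : WithTop R)), Or.inr hmG⟩ :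
            {p : Lex (Z × WithTop R) // (ofLex p).2 = ⊤ ∨ (ofLex p).1 ∈ G}) ∈ S}
        · -- bounded second coordinates: sup is (m, sup T)
          obtain ⟨t, ht⟩ := Rcomp _ ⟨rr, hrrT⟩ hT
          refine ⟨⟨toLex (m, (t : WithTop R)), Or.inr hmG⟩, fun q hq => ?_, fun u hu => ?_⟩
          · rcases eq_or_lt_of_le (hub_first q hq) with h1 | h1
            · obtain ⟨rq, hrq⟩ := WithTop.ne_top_iff_exists.mp (key q hq h1)
              have hrqT : (⟨toLex (m, (rq : WithTop R)), Or.inr hmG⟩ :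
                  {p : Lex (Z × WithTop R) // (ofLex p).2 = ⊤ ∨ (ofLex p).1 ∈ G}) ∈ S := by
                have : q = ⟨toLex (m, (rq : WithTop R)), Or.inr hmG⟩ :=
                  Subtype.ext (congrArg toLex (Prod.ext h1 hrq.symm))
                exact this ▸ hq
              refine (hle _ _).mpr (Or.inr ⟨h1, ?_⟩)
              rw [← hrq]
              exact WithTop.coe_le_coe.mpr (ht.1 hrqT)
            · exact (hle _ _).mpr (Or.inl h1)
          · rcases eq_or_lt_of_le (hubA u hu) with h1 | h1
            · refine (hle _ _).mpr (Or.inr ⟨h1, ?_⟩)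
              rcases eq_or_ne (ofLex u.1).2 ⊤ with h2 | h2
              · rw [h2]; exact le_top
              · obtain ⟨z0, hz0⟩ := WithTop.ne_top_iff_exists.mp h2
                rw [← hz0]
                refine WithTop.coe_le_coe.mpr (ht.2 ?_)
                intro r hrT
                rcases (hle _ _).mp (hu hrT) with h3 | ⟨h3, h4⟩
                · exact absurd h3 (by rw [← h1]; exact lt_irrefl m)
                · rw [← hz0] at h4
                  exact WithTop.coe_le_coe.mp h4
            · exact (hle _ _).mpr (Or.inl h1)
        · -- unbounded second coordinates: sup is (m, ⊤)
          refine ⟨⟨toLex (m, (⊤ : WithTop R)), Or.inl rfl⟩, fun q hq => ?_, fun u hu => ?_⟩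
          · rcases eq_or_lt_of_le (hub_first q hq) with h1 | h1
            · exact (hle _ _).mpr (Or.inr ⟨h1, le_top⟩)
            · exact (hle _ _).mpr (Or.inl h1)
          · rcases eq_or_lt_of_le (hubA u hu) with h1 | h1
            · refine (hle _ _).mpr (Or.inr ⟨h1, ?_⟩)
              rcases eq_or_ne (ofLex u.1).2 ⊤ with h2 | h2
              · rw [h2]; exact le_top
              · exfalso
                obtain ⟨z0, hz0⟩ := WithTop.ne_top_iff_exists.mp h2
                refine hT ⟨z0, ?_⟩
                intro r hrT
                rcases (hle _ _).mp (hu hrT) with h3 | ⟨h3, h4⟩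
                · exact absurd h3 (by rw [← h1]; exact lt_irrefl m)
                · rw [← hz0] at h4
                  exact WithTop.coe_le_coe.mp h4
            · exact (hle _ _).mpr (Or.inl h1)
      · -- no element of S has first coordinate m
        have hmG : m ∉ G := by
          intro hmG
          obtain ⟨⟨p', _, hp'cov⟩, -⟩ := hdisc m hmG
          have hle' : m ≤ p' := by
            refine hm.2 ?_
            rintro _ ⟨q, hq, rfl⟩
            have h1 : (ofLex q.1).1 < m :=
              lt_of_le_of_ne (hub_first q hq) (fun h => hmA ⟨q, hq, h⟩)
            exact le_of_not_gt fun h => hp'cov.2 h h1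
          exact absurd hle' (not_le.mpr hp'cov.lt)
        refine ⟨⟨toLex (m, (⊤ : WithTop R)), Or.inl rfl⟩, fun q hq => ?_, fun u hu => ?_⟩
        · have h1 : (ofLex q.1).1 < m :=
            lt_of_le_of_ne (hub_first q hq) (fun h => hmA ⟨q, hq, h⟩)
          exact (hle _ _).mpr (Or.inl h1)
        · rcases eq_or_lt_of_le (hubA u hu) with h1 | h1
          · have hz : (ofLex u.1).2 = ⊤ :=
              u.2.resolve_right fun h => hmG (by rw [h1]; exact h)
            exact (hle _ _).mpr (Or.inr ⟨h1, hz.ge⟩)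
          · exact (hle _ _).mpr (Or.inl h1)
  · -- dense order
    refine ⟨fun p q hpq => ?_⟩
    rcases (hlt p q).mp hpq with hab | ⟨hab, hxy⟩
    · -- first coordinates differ
      by_cases hx : (ofLex p.1).2 = ⊤
      · by_cases haG : (ofLex p.1).1 ∈ G
        · obtain ⟨-, s, hsG, hcov⟩ := hdisc _ haG
          have hsb : s ≤ (ofLex q.1).1 := le_of_not_gt fun h => hcov.2 hab h
          rcases lt_or_eq_of_le hsb with hsb | hsb
          · exact ⟨⟨toLex (s, (⊤ : WithTop R)), Or.inl rfl⟩,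
              (hlt _ _).mpr (Or.inl hcov.lt), (hlt _ _).mpr (Or.inl hsb)⟩
          · have hbG : (ofLex q.1).1 ∈ G := hsb ▸ hsG
            by_cases hy : (ofLex q.1).2 = ⊤
            · refine ⟨⟨toLex ((ofLex q.1).1, (r0 : WithTop R)), Or.inr hbG⟩,
                (hlt _ _).mpr (Or.inl hab), (hlt _ _).mpr (Or.inr ⟨rfl, ?_⟩)⟩
              rw [hy]
              exact WithTop.coe_lt_top r0
            · obtain ⟨ry, hry⟩ := WithTop.ne_top_iff_exists.mp hy
              obtain ⟨r1, hr1⟩ := RnoMin ry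
              refine ⟨⟨toLex ((ofLex q.1).1, (r1 : WithTop R)), Or.inr hbG⟩,
                (hlt _ _).mpr (Or.inl hab), (hlt _ _).mpr (Or.inr ⟨rfl, ?_⟩)⟩
              rw [← hry]
              exact WithTop.coe_lt_coe.mpr hr1
        · obtain ⟨z, hzG, hz⟩ := hsep _ haG _ (ne_of_gt hab)
          rcases hz with ⟨h1, h2⟩ | ⟨h1, h2⟩
          · exact ⟨⟨toLex (z, (⊤ : WithTop R)), Or.inl rfl⟩,
              (hlt _ _).mpr (Or.inl h1), (hlt _ _).mpr (Or.inl h2)⟩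
          · exact absurd ((hab.trans h1).trans h2) (lt_irrefl _)
      · have haG : (ofLex p.1).1 ∈ G := p.2.resolve_left hx
        exact ⟨⟨toLex ((ofLex p.1).1, (⊤ : WithTop R)), Or.inl rfl⟩,
          (hlt _ _).mpr (Or.inr ⟨rfl, lt_top_iff_ne_top.mpr hx⟩),
          (hlt _ _).mpr (Or.inl hab)⟩
    · -- same first coordinate, second coordinates differ
      have hx : (ofLex p.1).2 ≠ ⊤ := ne_top_of_lt hxy
      have haG : (ofLex p.1).1 ∈ G := p.2.resolve_left hx
      obtain ⟨r, hr⟩ := WithTop.ne_top_iff_exists.mp hx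
      by_cases hy : (ofLex q.1).2 = ⊤
      · obtain ⟨r', hr'⟩ := RnoMax r
        refine ⟨⟨toLex ((ofLex p.1).1, (r' : WithTop R)), Or.inr haG⟩,
          (hlt _ _).mpr (Or.inr ⟨rfl, ?_⟩), (hlt _ _).mpr (Or.inr ⟨hab, ?_⟩)⟩
        · rw [← hr]
          exact WithTop.coe_lt_coe.mpr hr'
        · rw [hy]
          exact WithTop.coe_lt_top r'
      · obtain ⟨ry, hry⟩ := WithTop.ne_top_iff_exists.mp hy
        have hrry : r < ry := by
          rw [← hr, ← hry] at hxy
          exact WithTop.coe_lt_coe.mp hxy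
        obtain ⟨z, hz1, hz2⟩ := Rdense r ry hrry
        refine ⟨⟨toLex ((ofLex p.1).1, (z : WithTop R)), Or.inr haG⟩,
          (hlt _ _).mpr (Or.inr ⟨rfl, ?_⟩), (hlt _ _).mpr (Or.inr ⟨hab, ?_⟩)⟩
        · rw [← hr]
          exact WithTop.coe_lt_coe.mpr hz1
        · rw [← hry]
          exact WithTop.coe_lt_coe.mpr hz2
end

section
/- Define Z_1 = ℤ and Z_{j+1} = (ℤ × {⊤}) ∪ (ℤ × Z_j) with lexicographic order (⊤ a new top above Z_j). Then for every j ≥ 1: Z_j is countable, has no least and no greatest element, and is Dedekind complete. -/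
lemma withTop_lub {X : Type*} [LinearOrder X]
    (h : ∀ S : Set X, S.Nonempty → BddAbove S → ∃ m, IsLUB S m) :
    ∀ S : Set (WithTop X), S.Nonempty → ∃ m, IsLUB S m := by
  intro S hS
  by_cases htop : (⊤ : WithTop X) ∈ S
  · exact ⟨⊤, fun x _ => le_top, fun b hb => hb htop⟩
  · set S' : Set X := {x | (x : WithTop X) ∈ S} with hS'
    have hS'ne : S'.Nonempty := by
      obtain ⟨s, hs⟩ := hS
      cases s with
      | top => exact absurd hs htop
      | coe x => exact ⟨x, hs⟩
    by_cases hbdd : BddAbove S'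
    · obtain ⟨m, hm⟩ := h S' hS'ne hbdd
      refine ⟨(m : WithTop X), ?_, ?_⟩
      · intro s hs
        cases s with
        | top => exact absurd hs htop
        | coe x => exact WithTop.coe_le_coe.mpr (hm.1 hs)
      · intro b hb
        cases b with
        | top => exact le_top
        | coe c =>
          exact WithTop.coe_le_coe.mpr (hm.2 (fun x hx => WithTop.coe_le_coe.mp (hb hx)))
    · refine ⟨⊤, fun x _ => le_top, ?_⟩
      intro b hb
      cases b with
      | top => exact le_rfl
      | coe c =>
        exact absurd ⟨c, fun x hx => WithTop.coe_le_coe.mp (hb hx)⟩ hbdd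

lemma lex_lub {X : Type*} [LinearOrder X]
    (h : ∀ S : Set (WithTop X), S.Nonempty → ∃ m, IsLUB S m) :
    ∀ S : Set (Lex (ℤ × WithTop X)), S.Nonempty → BddAbove S → ∃ m, IsLUB S m := by
  intro S hS ⟨b, hb⟩
  set A : ℤ → Prop := fun n => ∃ y : WithTop X, toLex (n, y) ∈ S with hA
  have hAb : ∃ c, ∀ n, A n → n ≤ c := by
    refine ⟨(ofLex b).1, fun n ⟨y, hy⟩ => ?_⟩
    have := hb hy
    rcases Prod.Lex.toLex_le_toLex (x := (n, y)) (y := (ofLex b)) |>.mp this with h1 | ⟨h1, _⟩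
    · exact le_of_lt h1
    · exact le_of_eq h1
  have hAne : ∃ n, A n := by
    obtain ⟨s, hs⟩ := hS
    exact ⟨(ofLex s).1, (ofLex s).2, hs⟩
  obtain ⟨n₀, hn₀, hn₀max⟩ := Int.exists_greatest_of_bdd hAb hAne
  set T : Set (WithTop X) := {y | toLex (n₀, y) ∈ S} with hT
  obtain ⟨m, hm⟩ := h T hn₀
  refine ⟨toLex (n₀, m), ?_, ?_⟩
  · intro s hs
    rcases lt_or_eq_of_le (hn₀max (ofLex s).1 ⟨(ofLex s).2, hs⟩) with h1 | h1
    · exact le_of_lt ((Prod.Lex.toLex_lt_toLex (x := (ofLex s)) (y := (n₀, m))).mpr (Or.inl h1))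
    · exact (Prod.Lex.toLex_le_toLex (x := (ofLex s)) (y := (n₀, m))).mpr (Or.inr ⟨h1, hm.1 (by simpa [hT, ← h1] using hs)⟩)
  · intro c hc
    obtain ⟨y₀, hy₀⟩ := hn₀
    have h1 : n₀ ≤ (ofLex c).1 := by
      have := hc hy₀
      rcases Prod.Lex.toLex_le_toLex (x := (n₀, y₀)) (y := (ofLex c)) |>.mp this with h1 | ⟨h1, _⟩
      · exact le_of_lt h1
      · exact le_of_eq h1
    rcases lt_or_eq_of_le h1 with h2 | h2
    · exact le_of_lt ((Prod.Lex.toLex_lt_toLex (x := (n₀, m)) (y := (ofLex c))).mpr (Or.inl h2))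
    · refine (Prod.Lex.toLex_le_toLex (x := (n₀, m)) (y := (ofLex c))).mpr (Or.inr ⟨h2, hm.2 fun y hy => ?_⟩)
      have := hc hy
      rcases Prod.Lex.toLex_le_toLex (x := (n₀, y)) (y := (ofLex c)) |>.mp this with h3 | ⟨_, h3⟩
      · omega
      · exact h3

lemma lex_nomin {X : Type*} [LinearOrder X] : NoMinOrder (Lex (ℤ × WithTop X)) := by
  constructor
  intro a
  refine ⟨toLex ((ofLex a).1 - 1, (ofLex a).2), ?_⟩
  exact (Prod.Lex.toLex_lt_toLex (x := _) (y := (ofLex a))).mpr (Or.inl (by omega))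

lemma lex_nomax {X : Type*} [LinearOrder X] : NoMaxOrder (Lex (ℤ × WithTop X)) := by
  constructor
  intro a
  refine ⟨toLex ((ofLex a).1 + 1, (ofLex a).2), ?_⟩
  exact (Prod.Lex.toLex_lt_toLex (x := (ofLex a)) (y := _)).mpr (Or.inl (by omega))

/-- The recursively defined chains: `Zchain 0 = ℤ`,
`Zchain (j+1) = ℤ ×_lex (Zchain j ∪ {⊤})`. -/
def Zchain : ℕ → Type
  | 0 => ℤ
  | (j + 1) => Lex (ℤ × WithTop (Zchain j))

instance instLinearOrderZchain : ∀ j, LinearOrder (Zchain j)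
  | 0 => inferInstanceAs (LinearOrder ℤ)
  | (j + 1) =>
      letI := instLinearOrderZchain j
      (inferInstance : LinearOrder (Lex (ℤ × WithTop (Zchain j))))

/-- Every `Zchain j` is countable, has no least and no greatest element, and
is Dedekind complete. -/
theorem stmt15 (j : ℕ) :
    Countable (Zchain j) ∧ NoMinOrder (Zchain j) ∧ NoMaxOrder (Zchain j) ∧
      (∀ S : Set (Zchain j), S.Nonempty → BddAbove S → ∃ m, IsLUB S m) := by
  induction j with
  | zero =>
    refine ⟨inferInstanceAs (Countable ℤ), inferInstanceAs (NoMinOrder ℤ),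
      inferInstanceAs (NoMaxOrder ℤ), ?_⟩
    intro S hne hbdd
    exact ⟨_, isLUB_csSup (α := ℤ) hne hbdd⟩
  | succ j ih =>
    obtain ⟨hcnt, _, _, hlub⟩ := ih
    refine ⟨?_, lex_nomin (X := Zchain j), lex_nomax (X := Zchain j),
      lex_lub (withTop_lub hlub)⟩
    exact inferInstanceAs (Countable (ℤ × WithTop (Zchain j)))
end

section
/- With Z_j as above, the set G_j = ℤ^j (elements of Z_j with no ⊤ coordinate, identified with the lexicographic power ℤ ×_lex ⋯ ×_lex ℤ, j times) is discretely embedded into Z_j: every element of G_j has an immediate successor and an immediate predecessor in Z_j, and both lie in G_j. Moreover, for any x ∈ Z_j \ G_j and any y ∈ Z_j with y ≠ x, there exists z ∈ G_j strictly between x and y. -/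
/-- `Gpart j` is the set of elements of `Zchain j` with no ⊤ coordinate,
i.e. the copy of the lexicographic power ℤ ×_lex ⋯ ×_lex ℤ inside it. -/
def Gpart : ∀ j, Set (Zchain j)
  | 0 => Set.univ
  | (j + 1) => fun p : Lex (ℤ × WithTop (Zchain j)) =>
      ∃ z ∈ Gpart j, (ofLex p).2 = WithTop.some z


section Aux
variable {α : Type*} [LinearOrder α]

lemma lex_covby {n : ℤ} {u v : WithTop α} (h : u ⋖ v) :
    (toLex (n, u) : Lex (ℤ × WithTop α)) ⋖ toLex (n, v) := by
  constructor
  · rw [Prod.Lex.lt_iff]; exact Or.inr ⟨rfl, h.1⟩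
  · intro c h1 h2
    rw [show c = toLex ((ofLex c).1, (ofLex c).2) from rfl] at h1 h2
    rw [Prod.Lex.lt_iff] at h1 h2
    simp only [ofLex_toLex] at h1 h2
    rcases h1 with h1 | ⟨rfl, h1⟩ <;> rcases h2 with h2 | ⟨h2e, h2⟩
    · omega
    · omega
    · omega
    · exact h.2 h1 h2

lemma lex_lt_fst {n m : ℤ} {u v : WithTop α} (h : n < m) :
    (toLex (n, u) : Lex (ℤ × WithTop α)) < toLex (m, v) :=
  Prod.Lex.lt_iff.2 (Or.inl h)

lemma lex_lt_snd {n : ℤ} {u v : WithTop α} (h : u < v) :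
    (toLex (n, u) : Lex (ℤ × WithTop α)) < toLex (n, v) :=
  Prod.Lex.lt_iff.2 (Or.inr ⟨rfl, h⟩)

lemma step {G : Set α} (hne : ∃ z, z ∈ G)
    (hgt : ∀ c : α, ∃ d, c < d) (hlt : ∀ c : α, ∃ d, d < c)
    (IH1 : ∀ x ∈ G, (∃ a ∈ G, a ⋖ x) ∧ (∃ b ∈ G, x ⋖ b))
    (IH2 : ∀ x ∉ G, ∀ y : α, y ≠ x →
      ∃ z ∈ G, (x < z ∧ z < y) ∨ (y < z ∧ z < x)) :
    (∀ x ∈ {p : Lex (ℤ × WithTop α) | ∃ z ∈ G, (ofLex p).2 = WithTop.some z},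
        (∃ a ∈ {p : Lex (ℤ × WithTop α) | ∃ z ∈ G, (ofLex p).2 = WithTop.some z}, a ⋖ x) ∧
        (∃ b ∈ {p : Lex (ℤ × WithTop α) | ∃ z ∈ G, (ofLex p).2 = WithTop.some z}, x ⋖ b)) ∧
      (∀ x ∉ {p : Lex (ℤ × WithTop α) | ∃ z ∈ G, (ofLex p).2 = WithTop.some z},
        ∀ y : Lex (ℤ × WithTop α), y ≠ x →
        ∃ z ∈ {p : Lex (ℤ × WithTop α) | ∃ z ∈ G, (ofLex p).2 = WithTop.some z},
          (x < z ∧ z < y) ∨ (y < z ∧ z < x)) := by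
  obtain ⟨z₀, hz₀⟩ := hne
  -- any element of α has a G-element above and below it
  have habove : ∀ c : α, ∃ b ∈ G, c < b := by
    intro c
    by_cases hc : c ∈ G
    · obtain ⟨b, hbG, hb⟩ := (IH1 c hc).2
      exact ⟨b, hbG, hb.1⟩
    · obtain ⟨d, hd⟩ := hgt c
      obtain ⟨b, hbG, hb⟩ := IH2 c hc d (ne_of_gt hd)
      rcases hb with ⟨h1, _⟩ | ⟨h1, h2⟩
      · exact ⟨b, hbG, h1⟩
      · exact absurd (h1.trans h2) (lt_asymm hd)
  have hbelow : ∀ c : α, ∃ a ∈ G, a < c := by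
    intro c
    by_cases hc : c ∈ G
    · obtain ⟨a, haG, ha⟩ := (IH1 c hc).1
      exact ⟨a, haG, ha.1⟩
    · obtain ⟨d, hd⟩ := hlt c
      obtain ⟨a, haG, ha⟩ := IH2 c hc d (ne_of_lt hd)
      rcases ha with ⟨h1, h2⟩ | ⟨_, h2⟩
      · exact absurd (h1.trans h2) (lt_asymm hd)
      · exact ⟨a, haG, h2⟩
  constructor
  · rintro x ⟨z, hzG, hz⟩
    obtain ⟨⟨a, haG, ha⟩, ⟨b, hbG, hb⟩⟩ := IH1 z hzG
    have hx : x = toLex ((ofLex x).1, (z : WithTop α)) := by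
      rw [← hz]; rfl
    constructor
    · refine ⟨toLex ((ofLex x).1, (a : WithTop α)), ⟨a, haG, rfl⟩, ?_⟩
      rw [hx]
      exact lex_covby (WithTop.coe_covBy_coe.2 ha)
    · refine ⟨toLex ((ofLex x).1, (b : WithTop α)), ⟨b, hbG, rfl⟩, ?_⟩
      rw [hx]
      exact lex_covby (WithTop.coe_covBy_coe.2 hb)
  · intro x hx y hyx
    rcases hox : ofLex x with ⟨n, w⟩
    rcases hoy : ofLex y with ⟨m, v⟩
    have hxe : x = toLex (n, w) := by rw [← hox]; rfl
    have hye : y = toLex (m, v) := by rw [← hoy]; rfl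
    have hw : (ofLex x).2 = w := by rw [hox]
    rcases hyx.lt_or_gt with hlt' | hlt'
    · -- y < x : find g with y < g < x
      rw [hxe, hye, Prod.Lex.lt_iff] at hlt'
      dsimp only [ofLex_toLex] at hlt'
      rcases hlt' with hmn | ⟨hmn, hvw⟩
      · -- m < n
        cases w with
        | top =>
            refine ⟨toLex (n, (z₀ : WithTop α)), ⟨z₀, hz₀, rfl⟩, Or.inr ⟨?_, ?_⟩⟩
            · rw [hye]; exact lex_lt_fst hmn
            · rw [hxe]; exact lex_lt_snd (WithTop.coe_lt_top z₀)
        | coe c =>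
            obtain ⟨a, haG, ha⟩ := hbelow c
            refine ⟨toLex (n, (a : WithTop α)), ⟨a, haG, rfl⟩, Or.inr ⟨?_, ?_⟩⟩
            · rw [hye]; exact lex_lt_fst hmn
            · rw [hxe]; exact lex_lt_snd (WithTop.coe_lt_coe.2 ha)
      · -- m = n, v < w
        subst hmn
        cases w with
        | top =>
            cases v with
            | top => exact absurd hvw (lt_irrefl _)
            | coe c =>
                obtain ⟨b, hbG, hb⟩ := habove c
                refine ⟨toLex (m, (b : WithTop α)), ⟨b, hbG, rfl⟩, Or.inr ⟨?_, ?_⟩⟩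
                · rw [hye]; exact lex_lt_snd (WithTop.coe_lt_coe.2 hb)
                · rw [hxe]; exact lex_lt_snd (WithTop.coe_lt_top b)
        | coe c =>
            have hcG : c ∉ G := fun hcG => hx ⟨c, hcG, hw⟩
            cases v with
            | top => exact absurd hvw (not_top_lt)
            | coe d =>
                have hdc : d < c := WithTop.coe_lt_coe.1 hvw
                obtain ⟨g, hgG, hg⟩ := IH2 c hcG d (ne_of_lt hdc)
                have hg' : d < g ∧ g < c := by
                  rcases hg with ⟨h1, h2⟩ | ⟨h1, h2⟩
                  · exact absurd (hdc.trans h1) (lt_asymm h2)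
                  · exact ⟨h1, h2⟩
                refine ⟨toLex (m, (g : WithTop α)), ⟨g, hgG, rfl⟩, Or.inr ⟨?_, ?_⟩⟩
                · rw [hye]; exact lex_lt_snd (WithTop.coe_lt_coe.2 hg'.1)
                · rw [hxe]; exact lex_lt_snd (WithTop.coe_lt_coe.2 hg'.2)
    · -- x < y : find g with x < g < y
      rw [hxe, hye, Prod.Lex.lt_iff] at hlt'
      dsimp only [ofLex_toLex] at hlt'
      rcases hlt' with hnm | ⟨hnm, hwv⟩
      · -- n < m
        cases w with
        | top =>
            -- x = (n, ⊤)
            by_cases hm1 : n + 1 < m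
            · refine ⟨toLex (n + 1, (z₀ : WithTop α)), ⟨z₀, hz₀, rfl⟩, Or.inl ⟨?_, ?_⟩⟩
              · rw [hxe]; exact lex_lt_fst (by omega)
              · rw [hye]; exact lex_lt_fst hm1
            · have hm2 : m = n + 1 := by omega
              subst hm2
              cases v with
              | top =>
                  refine ⟨toLex (n + 1, (z₀ : WithTop α)), ⟨z₀, hz₀, rfl⟩, Or.inl ⟨?_, ?_⟩⟩
                  · rw [hxe]; exact lex_lt_fst (by omega)
                  · rw [hye]; exact lex_lt_snd (WithTop.coe_lt_top z₀)
              | coe c =>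
                  obtain ⟨a, haG, ha⟩ := hbelow c
                  refine ⟨toLex (n + 1, (a : WithTop α)), ⟨a, haG, rfl⟩, Or.inl ⟨?_, ?_⟩⟩
                  · rw [hxe]; exact lex_lt_fst (by omega)
                  · rw [hye]; exact lex_lt_snd (WithTop.coe_lt_coe.2 ha)
        | coe c =>
            obtain ⟨b, hbG, hb⟩ := habove c
            refine ⟨toLex (n, (b : WithTop α)), ⟨b, hbG, rfl⟩, Or.inl ⟨?_, ?_⟩⟩
            · rw [hxe]; exact lex_lt_snd (WithTop.coe_lt_coe.2 hb)
            · rw [hye]; exact lex_lt_fst hnm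
      · -- n = m, w < v
        subst hnm
        cases w with
        | top => exact absurd hwv not_top_lt
        | coe c =>
            have hcG : c ∉ G := fun hcG => hx ⟨c, hcG, hw⟩
            cases v with
            | top =>
                obtain ⟨b, hbG, hb⟩ := habove c
                refine ⟨toLex (n, (b : WithTop α)), ⟨b, hbG, rfl⟩, Or.inl ⟨?_, ?_⟩⟩
                · rw [hxe]; exact lex_lt_snd (WithTop.coe_lt_coe.2 hb)
                · rw [hye]; exact lex_lt_snd (WithTop.coe_lt_top b)
            | coe d =>
                have hcd : c < d := WithTop.coe_lt_coe.1 hwv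
                obtain ⟨g, hgG, hg⟩ := IH2 c hcG d (ne_of_gt hcd)
                have hg' : c < g ∧ g < d := by
                  rcases hg with ⟨h1, h2⟩ | ⟨h1, h2⟩
                  · exact ⟨h1, h2⟩
                  · exact absurd (h2.trans hcd) (lt_asymm h1)
                refine ⟨toLex (n, (g : WithTop α)), ⟨g, hgG, rfl⟩, Or.inl ⟨?_, ?_⟩⟩
                · rw [hxe]; exact lex_lt_snd (WithTop.coe_lt_coe.2 hg'.1)
                · rw [hye]; exact lex_lt_snd (WithTop.coe_lt_coe.2 hg'.2)
end Aux

lemma int_gt (c : ℤ) : ∃ d : ℤ, c < d := ⟨c + 1, lt_add_one c⟩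
lemma int_lt (c : ℤ) : ∃ d : ℤ, d < c := ⟨c - 1, sub_one_lt c⟩

lemma zc_exists_gt : ∀ (j : ℕ) (c : Zchain j), ∃ d, c < d
  | 0, c => int_gt c
  | (_j + 1), c =>
      ⟨toLex ((ofLex c).1 + 1, (ofLex c).2), lex_lt_fst (lt_add_one _)⟩

lemma zc_exists_lt : ∀ (j : ℕ) (c : Zchain j), ∃ d, d < c
  | 0, c => int_lt c
  | (_j + 1), c =>
      ⟨toLex ((ofLex c).1 - 1, (ofLex c).2), lex_lt_fst (sub_one_lt _)⟩

lemma gpart_nonempty : ∀ (j : ℕ), ∃ z, z ∈ Gpart j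
  | 0 => ⟨(0 : ℤ), Set.mem_univ _⟩
  | (j + 1) => by
      obtain ⟨z, hz⟩ := gpart_nonempty j
      exact ⟨toLex (0, WithTop.some z), z, hz, rfl⟩

lemma base_zero :
    (∀ x ∈ (Set.univ : Set ℤ), (∃ a ∈ (Set.univ : Set ℤ), a ⋖ x) ∧
        (∃ b ∈ (Set.univ : Set ℤ), x ⋖ b)) ∧
      (∀ x ∉ (Set.univ : Set ℤ), ∀ y : ℤ, y ≠ x →
        ∃ z ∈ (Set.univ : Set ℤ), (x < z ∧ z < y) ∨ (y < z ∧ z < x)) := by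
  constructor
  · intro x _
    constructor
    · exact ⟨x - 1, Set.mem_univ _, ⟨by omega, fun c h1 h2 => by omega⟩⟩
    · exact ⟨x + 1, Set.mem_univ _, ⟨by omega, fun c h1 h2 => by omega⟩⟩
  · intro x hx
    exact absurd (Set.mem_univ x) hx

/-- `Gpart j` is discretely embedded in `Zchain j`: each of its elements has an
immediate successor and an immediate predecessor in `Zchain j`, both lying in
`Gpart j`; moreover between any `x ∈ Zchain j \ Gpart j` and any `y ≠ x`
there is an element of `Gpart j`. -/
theorem stmt16 (j : ℕ) :
    (∀ x ∈ Gpart j, (∃ a ∈ Gpart j, a ⋖ x) ∧ (∃ b ∈ Gpart j, x ⋖ b)) ∧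
      (∀ x ∉ Gpart j, ∀ y : Zchain j, y ≠ x →
        ∃ z ∈ Gpart j, (x < z ∧ z < y) ∨ (y < z ∧ z < x)) := by
  induction j with
  | zero => exact base_zero
  | succ j ih =>
      exact step (gpart_nonempty j) (zc_exists_gt j) (zc_exists_lt j) ih.1 ih.2
end

section
/- Let X be an odd FL_e-chain and V ≤ Z ≤ X_gr subalgebras of its group part. The type III partial lexicographic product of X, Z, V with an involutive FL_e-algebra Y is a subalgebra of the type I partial lexicographic product of X, Z, Y; i.e., the subset (V × (Y ∪ {⊤, ⊥})) ∪ ((Z \ V) × {⊤, ⊥}) ∪ ((X \ Z) × {⊥}) is closed under the coordinatewise product, the negation, and the lattice operations of (Z × (Y ∪ {⊤, ⊥})) ∪ ((X \ Z) × {⊥}). -/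
/-- An involutive FL_e-chain structure on a linearly ordered carrier. -/
structure InvFLe (X : Type*) [LinearOrder X] where
  mul : X → X → X
  imp : X → X → X
  t : X
  f : X
  mul_comm : ∀ a b, mul a b = mul b a
  mul_assoc : ∀ a b c, mul (mul a b) c = mul a (mul b c)
  mul_one : ∀ a, mul a t = a
  res : ∀ a b c, mul a b ≤ c ↔ b ≤ imp a c
  invol : ∀ a, imp (imp a f) f = a

/-- The residual complement `x' = x → f`. -/
def InvFLe.neg {X : Type*} [LinearOrder X] (S : InvFLe X) (x : X) : X :=
  S.imp x S.f

/-- The group part `X_gr = {x | x * x' = t}`. -/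
def InvFLe.gr {X : Type*} [LinearOrder X] (S : InvFLe X) : Set X :=
  {x | S.mul x (S.neg x) = S.t}

/-- Extension of a multiplication on `Y` to `Y ∪ {⊤,⊥}`: first `⊤` is added as
an annihilator, then `⊥` is added as an annihilator. -/
def mulExt {Y : Type*} (m : Y → Y → Y) (a b : WithBot (WithTop Y)) :
    WithBot (WithTop Y) :=
  WithBot.recBotCoe ⊥
    (fun wa => WithBot.recBotCoe ⊥
      (fun wb =>
        ((WithTop.recTopCoe ⊤
            (fun ya => WithTop.recTopCoe ⊤
              (fun yb => ((m ya yb : Y) : WithTop Y)) wb) wa : WithTop Y) :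
          WithBot (WithTop Y))) b) a

/-- Extension of the residual complement of `Y` to `Y ∪ {⊤,⊥}` by `⊥' = ⊤` and
`⊤' = ⊥`. -/
def negExt {Y : Type*} (n : Y → Y) (a : WithBot (WithTop Y)) :
    WithBot (WithTop Y) :=
  WithBot.recBotCoe ((⊤ : WithTop Y) : WithBot (WithTop Y))
    (fun w => WithTop.recTopCoe ⊥
      (fun y => (((n y : Y) : WithTop Y) : WithBot (WithTop Y))) w) a

/-- Universe of the type I partial lexicographic product
`PLP_I(X, Z, Y) = (Z × (Y ∪ {⊤,⊥})) ∪ ((X \ Z) × {⊥})`. -/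
def plp1U {X Y : Type*} [LinearOrder X] [LinearOrder Y] (Z : Set X) :
    Set (Lex (X × WithBot (WithTop Y))) :=
  {p | (ofLex p).1 ∈ Z ∨ (ofLex p).2 = ⊥}

/-- Universe of the type III partial lexicographic product
`PLP_III(X, Z, V, Y) =
  (V × (Y ∪ {⊤,⊥})) ∪ ((Z \ V) × {⊤,⊥}) ∪ ((X \ Z) × {⊥})`. -/
def plp3U {X Y : Type*} [LinearOrder X] [LinearOrder Y] (Z V : Set X) :
    Set (Lex (X × WithBot (WithTop Y))) :=
  {p | (ofLex p).1 ∈ V} ∪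
    {p | (ofLex p).1 ∈ Z \ V ∧
      ((ofLex p).2 = ⊥ ∨ (ofLex p).2 = ((⊤ : WithTop Y) : WithBot (WithTop Y)))} ∪
    {p | (ofLex p).1 ∉ Z ∧ (ofLex p).2 = ⊥}

/-- Coordinatewise multiplication of `PLP_I(X, Z, Y)`. -/
def plp1mul {X Y : Type*} (mX : X → X → X) (mY : Y → Y → Y)
    (p q : Lex (X × WithBot (WithTop Y))) : Lex (X × WithBot (WithTop Y)) :=
  toLex (mX (ofLex p).1 (ofLex q).1, mulExt mY (ofLex p).2 (ofLex q).2)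

open Classical in
/-- The residual complement of `PLP_I(X, Z, Y)`:
`(x, y)' = (x', ⊥)` if `x ∉ Z` and `(x', y')` if `x ∈ Z`. -/
noncomputable def plp1neg {X Y : Type*} [LinearOrder X] [LinearOrder Y]
    (Z : Set X) (nX : X → X) (nY : Y → Y)
    (p : Lex (X × WithBot (WithTop Y))) : Lex (X × WithBot (WithTop Y)) :=
  if (ofLex p).1 ∈ Z then toLex (nX (ofLex p).1, negExt nY (ofLex p).2)
  else toLex (nX (ofLex p).1, ⊥)

section Helpers

variable {X Y : Type*} [LinearOrder X] [LinearOrder Y] {Z V : Set X}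

lemma mem_plp3U_iff (p : Lex (X × WithBot (WithTop Y))) :
    p ∈ plp3U Z V ↔ (ofLex p).1 ∈ V ∨
      ((ofLex p).1 ∈ Z ∧ (ofLex p).1 ∉ V ∧
        ((ofLex p).2 = ⊥ ∨ (ofLex p).2 = ((⊤ : WithTop Y) : WithBot (WithTop Y)))) ∨
      ((ofLex p).1 ∉ Z ∧ (ofLex p).2 = ⊥) := by
  simp only [plp3U, Set.mem_union, Set.mem_setOf_eq, Set.mem_diff, and_assoc, or_assoc]

lemma mem_plp3U_of_bot (p : Lex (X × WithBot (WithTop Y)))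
    (h : (ofLex p).2 = ⊥) : p ∈ plp3U Z V := by
  rw [mem_plp3U_iff]
  by_cases hV : (ofLex p).1 ∈ V
  · exact Or.inl hV
  · by_cases hZ : (ofLex p).1 ∈ Z
    · exact Or.inr (Or.inl ⟨hZ, hV, Or.inl h⟩)
    · exact Or.inr (Or.inr ⟨hZ, h⟩)

lemma mem_plp3U_of_V (p : Lex (X × WithBot (WithTop Y)))
    (h : (ofLex p).1 ∈ V) : p ∈ plp3U Z V :=
  (mem_plp3U_iff p).2 (Or.inl h)

lemma mem_plp3U_of_Z (p : Lex (X × WithBot (WithTop Y)))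
    (hZ : (ofLex p).1 ∈ Z)
    (h : (ofLex p).2 = ⊥ ∨ (ofLex p).2 = ((⊤ : WithTop Y) : WithBot (WithTop Y))) :
    p ∈ plp3U Z V := by
  rw [mem_plp3U_iff]
  by_cases hV : (ofLex p).1 ∈ V
  · exact Or.inl hV
  · exact Or.inr (Or.inl ⟨hZ, hV, h⟩)

lemma fst_mem_Z_of_mem_plp3U (hVZ : V ⊆ Z) (p : Lex (X × WithBot (WithTop Y)))
    (hp : p ∈ plp3U Z V) (h : (ofLex p).2 ≠ ⊥) : (ofLex p).1 ∈ Z := by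
  rcases (mem_plp3U_iff p).1 hp with h1 | h1 | h1
  · exact hVZ h1
  · exact h1.1
  · exact absurd h1.2 h

lemma fst_mem_V_of_mem_plp3U (p : Lex (X × WithBot (WithTop Y)))
    (hp : p ∈ plp3U Z V) (h : (ofLex p).2 ≠ ⊥)
    (h' : (ofLex p).2 ≠ ((⊤ : WithTop Y) : WithBot (WithTop Y))) :
    (ofLex p).1 ∈ V := by
  rcases (mem_plp3U_iff p).1 hp with h1 | h1 | h1
  · exact h1
  · rcases h1.2.2 with h2 | h2
    · exact absurd h2 h
    · exact absurd h2 h'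
  · exact absurd h1.2 h

end Helpers

/-- The type III partial lexicographic product is a subalgebra of the type I
partial lexicographic product: its universe is closed under the coordinatewise
product, the negation, and the lattice operations of `PLP_I(X, Z, Y)`. -/
theorem stmt18 {X Y : Type*} [LinearOrder X] [LinearOrder Y]
    (SX : InvFLe X) (hodd : SX.t = SX.f) (SY : InvFLe Y)
    (V Z : Set X) (hVZ : V ⊆ Z) (hZgr : Z ⊆ SX.gr)
    (htV : SX.t ∈ V) (hVmul : ∀ x ∈ V, ∀ y ∈ V, SX.mul x y ∈ V)
    (hVneg : ∀ x ∈ V, SX.neg x ∈ V)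
    (htZ : SX.t ∈ Z) (hZmul : ∀ x ∈ Z, ∀ y ∈ Z, SX.mul x y ∈ Z)
    (hZneg : ∀ x ∈ Z, SX.neg x ∈ Z) :
    (∀ p ∈ plp3U (Y := Y) Z V, ∀ q ∈ plp3U (Y := Y) Z V,
        plp1mul SX.mul SY.mul p q ∈ plp3U (Y := Y) Z V) ∧
    (∀ p ∈ plp3U (Y := Y) Z V,
        plp1neg Z SX.neg SY.neg p ∈ plp3U (Y := Y) Z V) ∧
    (∀ p ∈ plp3U (Y := Y) Z V, ∀ q ∈ plp3U (Y := Y) Z V,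
        p ⊓ q ∈ plp3U (Y := Y) Z V ∧ p ⊔ q ∈ plp3U (Y := Y) Z V) := by
  refine ⟨?_, ?_, ?_⟩
  · -- multiplication
    intro p hp q hq
    obtain ⟨x1, a⟩ := p
    obtain ⟨x2, b⟩ := q
    rcases a with _ | (_ | ya)
    · exact mem_plp3U_of_bot _ rfl
    · -- a = ⊤
      rcases b with _ | wb
      · exact mem_plp3U_of_bot _ rfl
      · have hx1 : x1 ∈ Z := fst_mem_Z_of_mem_plp3U hVZ _ hp (fun h => by cases h)
        have hx2 : x2 ∈ Z := fst_mem_Z_of_mem_plp3U hVZ _ hq (fun h => by cases h)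
        refine mem_plp3U_of_Z _ (hZmul _ hx1 _ hx2) (Or.inr ?_)
        rcases wb with _ | yb <;> rfl
    · -- a = ↑↑ya
      rcases b with _ | (_ | yb)
      · exact mem_plp3U_of_bot _ rfl
      · -- b = ⊤
        have hx1 : x1 ∈ Z := fst_mem_Z_of_mem_plp3U hVZ _ hp (fun h => by cases h)
        have hx2 : x2 ∈ Z := fst_mem_Z_of_mem_plp3U hVZ _ hq (fun h => by cases h)
        exact mem_plp3U_of_Z _ (hZmul _ hx1 _ hx2) (Or.inr rfl)
      · have hx1 : x1 ∈ V :=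
          fst_mem_V_of_mem_plp3U _ hp (fun h => by cases h)
            (fun h => by cases h)
        have hx2 : x2 ∈ V :=
          fst_mem_V_of_mem_plp3U _ hq (fun h => by cases h)
            (fun h => by cases h)
        exact mem_plp3U_of_V _ (hVmul _ hx1 _ hx2)
  · -- negation
    intro p hp
    obtain ⟨x, a⟩ := p
    unfold plp1neg
    split_ifs with hZ
    · rcases (mem_plp3U_iff _).1 hp with h1 | h1 | h1
      · exact mem_plp3U_of_V _ (hVneg _ h1)
      · refine mem_plp3U_of_Z _ (hZneg _ h1.1) ?_
        rcases h1.2.2 with h2 | h2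
        · right
          have : a = ⊥ := h2
          subst this; rfl
        · left
          have : a = ((⊤ : WithTop Y) : WithBot (WithTop Y)) := h2
          subst this; rfl
      · exact absurd hZ h1.1
    · exact mem_plp3U_of_bot _ rfl
  · -- lattice operations
    intro p hp q hq
    rcases le_total p q with h | h
    · rw [inf_eq_left.2 h, sup_eq_right.2 h]
      exact ⟨hp, hq⟩
    · rw [inf_eq_right.2 h, sup_eq_left.2 h]
      exact ⟨hq, hp⟩
end
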